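/- arXiv:2504.21514 — 5 statements merged into one kernel-verified Lean document; each statement's English description precedes it below -/
import Mathlib

section
/- Let α, β, γ ∈ ℝ with α ≠ 0 and α ≠ 1, and consider the conics 𝒞 : y = x² and Γ : αy = x² + βxy + γy² in ℝ². For an integer n ≥ 3, there exists a closed polygonal line with n sides inscribed in Γ and circumscribed about 𝒞 if and only if both of the following hold: (a) α = cos²(πm/n) for some positive integer m with 2m < n; and (b) β² − 4γ(1 − α) > 0. -/
open Filter Topology

/-- A conic in `ℝ²`, given by the six coefficients of a quadratic polynomial
`a x² + b x y + c y² + d x + e y + f`. -/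
structure Conic where
  a : ℝ
  b : ℝ
  c : ℝ
  d : ℝ
  e : ℝ
  f : ℝ

namespace Conic

/-- Value of the defining quadratic polynomial at a point of `ℝ²`. -/
def eval (Q : Conic) (p : ℝ × ℝ) : ℝ :=
  Q.a * p.1 ^ 2 + Q.b * p.1 * p.2 + Q.c * p.2 ^ 2 + Q.d * p.1 + Q.e * p.2 + Q.f

/-- The conic as a subset of `ℝ²`. -/
def zeroSet (Q : Conic) : Set (ℝ × ℝ) := {p | Q.eval p = 0}

/-- Gradient of the defining polynomial. -/
def grad (Q : Conic) (p : ℝ × ℝ) : ℝ × ℝ :=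
  (2 * Q.a * p.1 + Q.b * p.2 + Q.d, Q.b * p.1 + 2 * Q.c * p.2 + Q.e)

/-- A smooth conic: the polynomial has total degree two, the zero set is nonempty,
and the gradient is nonzero at every point of the zero set. -/
def IsSmooth (Q : Conic) : Prop :=
  ¬ (Q.a = 0 ∧ Q.b = 0 ∧ Q.c = 0) ∧ Q.zeroSet.Nonempty ∧ ∀ p ∈ Q.zeroSet, Q.grad p ≠ 0

/-- `P` is an inside point of the conic: `P` is off the conic and every line through `P`
meets the conic in two distinct points. -/
def Inside (Q : Conic) (P : ℝ × ℝ) : Prop :=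
  P ∉ Q.zeroSet ∧ ∀ v : ℝ × ℝ, v ≠ 0 →
    ∃ t₁ t₂ : ℝ, t₁ ≠ t₂ ∧ (P + t₁ • v) ∈ Q.zeroSet ∧ (P + t₂ • v) ∈ Q.zeroSet

/-- `P` is an outside point of the conic: off the conic and not an inside point. -/
def Outside (Q : Conic) (P : ℝ × ℝ) : Prop := P ∉ Q.zeroSet ∧ ¬ Q.Inside P

/-- The line through `A` and `B` is tangent to the conic: the restriction of the defining
polynomial to an affine parametrization of the line is a nonzero multiple of a perfect
square, i.e. the line meets the conic in exactly one point, which is a double root. -/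
def Tangent (Q : Conic) (A B : ℝ × ℝ) : Prop :=
  A ≠ B ∧ ∃ q t₀ : ℝ, q ≠ 0 ∧ ∀ t : ℝ, Q.eval (A + t • (B - A)) = q * (t - t₀) ^ 2

end Conic

/-- The line through two (distinct) points of `ℝ²`, as a set. -/
def lineThrough (A B : ℝ × ℝ) : Set (ℝ × ℝ) := {p | ∃ t : ℝ, p = A + t • (B - A)}

/-- A subset of `ℝ²` is a line. -/
def IsLine (L : Set (ℝ × ℝ)) : Prop :=
  ∃ u v w : ℝ, ¬ (u = 0 ∧ v = 0) ∧ L = {p : ℝ × ℝ | u * p.1 + v * p.2 + w = 0}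

/-- The parabola `𝒞 : y = x²`, with defining polynomial `x² − y`. -/
def parabolaC : Conic := ⟨1, 0, 0, 0, -1, 0⟩

/-- The conic `Γ : α y = x² + β x y + γ y²`, with defining polynomial
`x² + β x y + γ y² − α y`. -/
def conicGamma (α β γ : ℝ) : Conic := ⟨1, β, γ, 0, -α, 0⟩

section StatementFiveProof

/-- evaluation of the parabola polynomial along a parametrized line -/
lemma parab_eval (A B : ℝ × ℝ) (t : ℝ) :
    parabolaC.eval (A + t • (B - A)) = (A.1 + t * (B.1 - A.1)) ^ 2 - (A.2 + t * (B.2 - A.2)) := by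
  simp [Conic.eval, parabolaC, Prod.fst_add, Prod.snd_add, Prod.smul_fst, Prod.smul_snd]
  ring

/-- from tangency, extract the tangency parameter s : both points lie on y = 2 s x - s²,
and the line is non-vertical. -/
lemma tangent_param {A B : ℝ × ℝ} (h : parabolaC.Tangent A B) :
    ∃ s : ℝ, A.1 ≠ B.1 ∧ A.2 = 2 * s * A.1 - s ^ 2 ∧ B.2 = 2 * s * B.1 - s ^ 2 := by
  obtain ⟨hAB, q, t₀, hq, hid⟩ := h
  have h0 := hid 0; have h1 := hid 1; have h2 := hid (-1)
  rw [parab_eval] at h0 h1 h2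
  have hqd : q = (B.1 - A.1) ^ 2 := by linear_combination h0 - h1/2 - h2/2
  have hdne : B.1 - A.1 ≠ 0 := fun h => hq (by rw [hqd, h]; ring)
  refine ⟨A.1 + t₀ * (B.1 - A.1), fun hc => hdne (by rw [← hc]; ring), ?_, ?_⟩
  · linear_combination -h0 - t₀^2 * hqd
  · linear_combination -h1 - (1-t₀)^2 * hqd

/-- uniqueness of the tangency parameter -/
lemma tangent_param_unique {A B : ℝ × ℝ} (hAB : A.1 ≠ B.1) {s s' : ℝ}
    (h1 : A.2 = 2 * s * A.1 - s ^ 2) (h2 : B.2 = 2 * s * B.1 - s ^ 2)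
    (h1' : A.2 = 2 * s' * A.1 - s' ^ 2) (h2' : B.2 = 2 * s' * B.1 - s' ^ 2) : s = s' := by
  have hd : A.1 - B.1 ≠ 0 := sub_ne_zero.2 hAB
  have key : (s - s') * (2 * (A.1 - B.1)) = 0 := by nlinarith [h1, h2, h1', h2']
  rcases mul_eq_zero.1 key with h | h
  · linarith [sub_eq_zero.1 h]
  · exact absurd (by linarith) hd

/-- converse: two distinct points on a tangent line give tangency -/
lemma tangent_of_param {A B : ℝ × ℝ} (s : ℝ) (hAB : A.1 ≠ B.1)
    (h1 : A.2 = 2 * s * A.1 - s ^ 2) (h2 : B.2 = 2 * s * B.1 - s ^ 2) :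
    parabolaC.Tangent A B := by
  have hd : B.1 - A.1 ≠ 0 := sub_ne_zero.2 (Ne.symm hAB)
  refine ⟨fun hc => hAB (by rw [hc]), (B.1 - A.1) ^ 2, (s - A.1) / (B.1 - A.1), pow_ne_zero _ hd, fun t => ?_⟩
  rw [parab_eval]
  have key : (B.1 - A.1) * (t - (s - A.1) / (B.1 - A.1)) = t * (B.1 - A.1) + A.1 - s := by
    field_simp; ring
  calc (A.1 + t * (B.1 - A.1)) ^ 2 - (A.2 + t * (B.2 - A.2))
      = (t * (B.1 - A.1) + A.1 - s) ^ 2 := by linear_combination (t-1)*h1 - t*h2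
    _ = ((B.1 - A.1) * (t - (s - A.1) / (B.1 - A.1))) ^ 2 := by rw [key]
    _ = (B.1 - A.1) ^ 2 * (t - (s - A.1) / (B.1 - A.1)) ^ 2 := by ring


/-- the tangent line to the parabola at parameter s, as a set -/
def tangentLine (s : ℝ) : Set (ℝ × ℝ) := {p | p.2 = 2 * s * p.1 - s ^ 2}

lemma lineThrough_eq_tangentLine {A B : ℝ × ℝ} (s : ℝ) (hAB : A.1 ≠ B.1)
    (h1 : A.2 = 2 * s * A.1 - s ^ 2) (h2 : B.2 = 2 * s * B.1 - s ^ 2) :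
    lineThrough A B = tangentLine s := by
  have hd : B.1 - A.1 ≠ 0 := sub_ne_zero.2 (Ne.symm hAB)
  ext p
  constructor
  · rintro ⟨t, rfl⟩
    show (A + t • (B - A)).2 = 2 * s * (A + t • (B - A)).1 - s ^ 2
    simp only [Prod.snd_add, Prod.smul_snd, Prod.fst_add, Prod.smul_fst, Prod.fst_sub, Prod.snd_sub,
      smul_eq_mul]
    linear_combination (1 - t) * h1 + t * h2
  · intro hp
    refine ⟨(p.1 - A.1) / (B.1 - A.1), ?_⟩
    have hx : (A + ((p.1 - A.1) / (B.1 - A.1)) • (B - A)).1 = p.1 := by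
      simp only [Prod.fst_add, Prod.smul_fst, Prod.fst_sub, smul_eq_mul]
      field_simp
      ring
    have hy : (A + ((p.1 - A.1) / (B.1 - A.1)) • (B - A)).2 = 2 * s * p.1 - s ^ 2 := by
      simp only [Prod.snd_add, Prod.smul_snd, Prod.fst_sub, Prod.snd_sub, smul_eq_mul]
      rw [h1, h2]
      field_simp
      ring
    have hp' : p.2 = 2 * s * p.1 - s ^ 2 := hp
    exact Prod.ext (hx.symm) (by rw [hy, ← hp'])

lemma tangentLine_injective {s s' : ℝ} (h : tangentLine s = tangentLine s') : s = s' := by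
  have h1 : (s, s^2) ∈ tangentLine s := by show s^2 = 2*s*s - s^2; ring
  rw [h] at h1
  have h2 : s^2 = 2*s'*s - s'^2 := h1
  nlinarith [sq_nonneg (s - s')]

/-- vertex on two distinct tangent lines -/
lemma vertex_coords {P : ℝ × ℝ} {s s' : ℝ} (hss : s ≠ s')
    (h1 : P.2 = 2 * s * P.1 - s ^ 2) (h2 : P.2 = 2 * s' * P.1 - s' ^ 2) :
    P.1 = (s + s') / 2 ∧ P.2 = s * s' := by
  have hd : s - s' ≠ 0 := sub_ne_zero.2 hss
  have hx : P.1 = (s + s') / 2 := by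
    have key : (s - s') * (2 * P.1 - (s + s')) = 0 := by linear_combination h2 - h1
    rcases mul_eq_zero.1 key with h | h
    · exact absurd h hd
    · linarith
  refine ⟨hx, ?_⟩
  rw [h1, hx]; ring

/-- the symmetric quadratic relation G -/
noncomputable def gG (α β γ x y : ℝ) : ℝ :=
  x^2 + y^2 + (2 - 4*α)*x*y + 2*β*(x + y) + 4*γ

lemma gG_symm (α β γ x y : ℝ) : gG α β γ x y = gG α β γ y x := by unfold gG; ring

/-- membership in Γ of a vertex in terms of G -/
lemma gamma_mem_iff (α β γ s t : ℝ) (hs : s ≠ 0) (ht : t ≠ 0) :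
    (conicGamma α β γ).eval ((s + t)/2, s * t) = 0 ↔ gG α β γ (1/s) (1/t) = 0 := by
  have key : s^2 * t^2 * gG α β γ (1/s) (1/t) = 4 * (conicGamma α β γ).eval ((s + t)/2, s * t) := by
    unfold gG Conic.eval conicGamma
    field_simp
    ring
  constructor
  · intro h
    have h2 : s^2 * t^2 * gG α β γ (1/s) (1/t) = 0 := by rw [key, h]; ring
    rcases mul_eq_zero.1 h2 with h3 | h3
    · exact absurd h3 (by positivity)
    · exact h3
  · intro h
    have h2 : (4:ℝ) * (conicGamma α β γ).eval ((s + t)/2, s * t) = 0 := by rw [← key, h]; ring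
    linarith

/-- nonzero parameters: if a vertex of Γ has a zero tangency parameter, both are zero -/
lemma params_ne_zero (α β γ s t : ℝ) (hst : s ≠ t)
    (h : (conicGamma α β γ).eval ((s + t)/2, s * t) = 0) : s ≠ 0 ∧ t ≠ 0 := by
  unfold Conic.eval conicGamma at h
  simp only at h
  constructor
  · rintro rfl
    have h2 : t ^ 2 = 0 := by linear_combination 4*h
    exact hst ((pow_eq_zero_iff (two_ne_zero)).1 h2).symm
  · rintro rfl
    have h2 : s ^ 2 = 0 := by linear_combination 4*h
    exact hst ((pow_eq_zero_iff (two_ne_zero)).1 h2)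


lemma geom_seq {M : Type*} [CommRing M] (z : ℕ → M) (r : M)
    (h : ∀ k, z (k+1) = r * z k) : ∀ k, z k = r ^ k * z 0 := by
  intro k
  induction k with
  | zero => simp
  | succ k ih => rw [h k, ih]; ring

lemma zero_of_rec (c : ℝ) (y : ℕ → ℝ) (hrec : ∀ k, y (k+2) = c * y (k+1) - y k)
    (h0 : y 0 = 0) (h1 : y 1 = 0) : ∀ k, y k = 0 := by
  have key : ∀ k, y k = 0 ∧ y (k+1) = 0 := by
    intro k
    induction k with
    | zero => exact ⟨h0, h1⟩
    | succ k ih => exact ⟨ih.2, by rw [hrec k, ih.1, ih.2]; ring⟩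
  exact fun k => (key k).1

/-- big |c| forces the periodic solution to vanish -/
lemma big_c_case (c : ℝ) (hc : 2 < |c|) (n : ℕ) (hn : 1 ≤ n) (y : ℕ → ℝ)
    (hrec : ∀ k, y (k+2) = c * y (k+1) - y k) (hper : ∀ k, y (k+n) = y k) :
    ∀ k, y k = 0 := by
  have hc2 : 0 < c^2 - 4 := by nlinarith [sq_abs c]
  set D := Real.sqrt (c^2 - 4) with hD
  have hD0 : 0 < D := Real.sqrt_pos.2 hc2
  have hD2 : D^2 = c^2 - 4 := Real.sq_sqrt (le_of_lt hc2)
  obtain ⟨l, hl, hlc⟩ : ∃ l : ℝ, 1 < |l| ∧ l * (c - l) = 1 := by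
    rcases lt_or_ge 0 c with h | h
    · have hc' : 2 < c := by rwa [abs_of_pos h] at hc
      refine ⟨(c + D)/2, ?_, by nlinarith [hD2]⟩
      rw [abs_of_pos (by linarith)]; linarith
    · have hc' : c < -2 := by rw [abs_of_nonpos h] at hc; linarith
      refine ⟨(c - D)/2, ?_, by nlinarith [hD2]⟩
      rw [abs_of_neg (by linarith)]; linarith
  have hl0 : l ≠ 0 := by intro h; rw [h] at hl; simp at hl; linarith
  have hzrec : ∀ k, (fun k => y (k+1) - l * y k) (k+1) = (1/l) * (fun k => y (k+1) - l * y k) k := by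
    intro k
    show y (k+2) - l * y (k+1) = (1/l) * (y (k+1) - l * y k)
    rw [hrec k]
    field_simp
    linear_combination (y (k+1)) * hlc
  have hwrec : ∀ k, (fun k => y (k+1) - (1/l) * y k) (k+1)
      = l * (fun k => y (k+1) - (1/l) * y k) k := by
    intro k
    show y (k+2) - (1/l) * y (k+1) = l * (y (k+1) - (1/l) * y k)
    rw [hrec k]
    field_simp
    linear_combination (y (k+1)) * hlc
  have hz := geom_seq (fun k => y (k+1) - l * y k) (1/l) hzrec
  have hw := geom_seq (fun k => y (k+1) - (1/l) * y k) l hwrec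
  have hyn : y n = y 0 := by have := hper 0; simpa using this
  have hyn1 : y (n+1) = y 1 := by have := hper 1; rwa [show 1+n = n+1 by omega] at this
  have hzn : ((1/l)^n - 1) * (y 1 - l * y 0) = 0 := by
    have h1 := hz n
    norm_num only at h1
    rw [hyn, hyn1] at h1
    linear_combination -h1
  have hwn : (l^n - 1) * (y 1 - (1/l) * y 0) = 0 := by
    have h1 := hw n
    norm_num only at h1
    rw [hyn, hyn1] at h1
    linear_combination -h1
  have habs : |1/l| < 1 := by
    rw [abs_div, abs_one]
    rw [div_lt_one (by positivity)]
    linarith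
  have hz0 : y 1 - l * y 0 = 0 := by
    rcases mul_eq_zero.1 hzn with h | h
    · exfalso
      have : |(1/l)^n| < 1 := by
        rw [abs_pow]
        exact pow_lt_one₀ (abs_nonneg _) habs (by omega)
      rw [sub_eq_zero.1 h] at this
      simp at this
    · exact h
  have hw0 : y 1 - (1/l) * y 0 = 0 := by
    rcases mul_eq_zero.1 hwn with h | h
    · exfalso
      have h2 : 1 < |l^n| := by
        rw [abs_pow]
        exact one_lt_pow₀ hl (by omega)
      rw [sub_eq_zero.1 h] at h2
      simp at h2
    · exact h
  have hy0 : y 0 = 0 := by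
    have key : (l - 1/l) * y 0 = 0 := by linear_combination hw0 - hz0
    rcases mul_eq_zero.1 key with h | h
    · exfalso
      have : l^2 = 1 := by field_simp at h; linear_combination h
      have : |l|^2 = 1 := by rw [← abs_pow, this]; simp
      nlinarith [hl]
    · exact h
  have hy1 : y 1 = 0 := by rw [hy0] at hz0; linarith
  exact zero_of_rec c y hrec hy0 hy1


open Real in
/-- small |c| case: the angle is a rational multiple of 2π -/
lemma small_c_case (c : ℝ) (hc : |c| < 2) (n : ℕ) (hn : 1 ≤ n) (y : ℕ → ℝ)
    (hrec : ∀ k, y (k+2) = c * y (k+1) - y k) (hper : ∀ k, y (k+n) = y k)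
    (hy : ¬ (y 0 = 0 ∧ y 1 = 0)) :
    ∃ θ : ℝ, Real.cos θ = c/2 ∧ 0 < θ ∧ θ < π ∧ ∃ m : ℤ, (n : ℝ) * θ = 2 * π * m := by
  have hc1 : -1 < c/2 := by have := neg_abs_le c; linarith [abs_lt.1 hc]
  have hc2 : c/2 < 1 := by linarith [abs_lt.1 hc]
  set θ := Real.arccos (c/2) with hθdef
  have hcos : Real.cos θ = c/2 := Real.cos_arccos (by linarith) (by linarith)
  have hθ0 : 0 < θ := Real.arccos_pos.2 hc2
  have hθπ : θ < π :=
    lt_of_le_of_ne (Real.arccos_le_pi _) (fun h => absurd (Real.arccos_eq_pi.1 h) (by linarith))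
  have hsin : 0 < Real.sin θ := Real.sin_pos_of_pos_of_lt_pi hθ0 hθπ
  refine ⟨θ, hcos, hθ0, hθπ, ?_⟩
  set ω : ℂ := Complex.exp (θ * Complex.I) with hωdef
  set ω' : ℂ := Complex.exp (-θ * Complex.I) with hω'def
  have hωω' : ω * ω' = 1 := by
    rw [hωdef, hω'def, ← Complex.exp_add]
    norm_num
  have hω : ω = (Real.cos θ : ℂ) + (Real.sin θ : ℂ) * Complex.I := by
    rw [hωdef, Complex.exp_mul_I, Complex.ofReal_cos, Complex.ofReal_sin]
  have hω' : ω' = (Real.cos θ : ℂ) - (Real.sin θ : ℂ) * Complex.I := by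
    rw [hω'def, show -(θ:ℂ) * Complex.I = ((-θ : ℝ) : ℂ) * Complex.I by push_cast; ring,
      Complex.exp_mul_I, ← Complex.ofReal_cos, ← Complex.ofReal_sin, Real.cos_neg, Real.sin_neg]
    push_cast
    ring
  have hcω : (c : ℂ) - ω = ω' := by
    rw [hω, hω']
    have hre : c = 2 * Real.cos θ := by linarith
    rw [hre]
    push_cast
    ring
  set z : ℕ → ℂ := fun k => (y (k+1) : ℂ) - ω * (y k : ℂ) with hzdef
  have hzrec : ∀ k, z (k+1) = ω' * z k := by
    intro k
    show ((y (k+2) : ℝ) : ℂ) - ω * (y (k+1) : ℂ) = ω' * ((y (k+1) : ℂ) - ω * (y k : ℂ))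
    have hr : ((y (k+2) : ℝ) : ℂ) = (c : ℂ) * (y (k+1) : ℂ) - (y k : ℂ) := by
      push_cast [hrec k]; ring
    linear_combination hr + (y (k+1) : ℂ) * hcω + (y k : ℂ) * hωω'
  have hz := geom_seq z ω' hzrec
  have hyn : y n = y 0 := by have := hper 0; simpa using this
  have hyn1 : y (n+1) = y 1 := by have := hper 1; rwa [show 1+n = n+1 by omega] at this
  have hzn : (ω'^n - 1) * z 0 = 0 := by
    have h1 := hz n
    have h2 : z n = z 0 := by
      rw [hzdef]
      simp only [hyn, hyn1]
    rw [h2] at h1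
    linear_combination -h1
  have hz0 : z 0 ≠ 0 := by
    intro h
    rw [hzdef] at h
    norm_num at h
    have h1 : ((y 1 : ℝ) : ℂ) = ω * ((y 0 : ℝ) : ℂ) := by linear_combination h
    rw [hω, Complex.ext_iff] at h1
    obtain ⟨hre, him⟩ := h1
    simp [Complex.add_im, Complex.mul_im, Complex.add_re, Complex.mul_re] at hre him
    have hy0 : y 0 = 0 := him.resolve_left (ne_of_gt hsin)
    refine hy ⟨hy0, ?_⟩
    rw [hy0] at hre
    simpa using hre
  have hωn : ω'^n = 1 := by
    rcases mul_eq_zero.1 hzn with h | h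
    · exact sub_eq_zero.1 h
    · exact absurd h hz0
  rw [hω'def, ← Complex.exp_nat_mul] at hωn
  obtain ⟨m, hm⟩ := Complex.exp_eq_one_iff.1 hωn
  refine ⟨-m, ?_⟩
  have key : ((-(n * θ) : ℝ) : ℂ) * Complex.I = ((2 * π * m : ℝ) : ℂ) * Complex.I := by
    push_cast
    linear_combination hm
  have key2 : (-(n * θ) : ℝ) = (2 * π * m : ℝ) := by
    exact_mod_cast mul_right_cancel₀ Complex.I_ne_zero key
  push_cast
  linarith


/-- a generic phase avoiding countably many bad conditions -/
lemma exists_good_phi (v : ℝ) (a b b' : ℕ → ℝ) :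
    ∃ φ : ℝ, (∀ k, Real.cos (a k + φ) ≠ v) ∧ (∀ k, Real.sin (b k + φ) ≠ 0) ∧
      (∀ k, Real.sin (b' k + φ) ≠ 0) := by
  have hsin : ∀ (g : ℕ → ℝ), (⋃ k : ℕ, {φ : ℝ | Real.sin (g k + φ) = 0}).Countable := by
    intro g
    apply Set.countable_iUnion
    intro k
    apply Set.Countable.mono ?_ (Set.countable_range (fun z : ℤ => z * Real.pi - g k))
    intro φ hφ
    obtain ⟨z, hz⟩ := Real.sin_eq_zero_iff.1 hφ
    exact ⟨z, by show (z:ℝ) * Real.pi - g k = φ; linarith⟩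
  have hcos : (⋃ k : ℕ, {φ : ℝ | Real.cos (a k + φ) = v}).Countable := by
    apply Set.countable_iUnion
    intro k
    rcases le_or_gt |v| 1 with hv | hv
    · have hv1 : -1 ≤ v := by rcases abs_le.1 hv with ⟨h1, h2⟩; linarith
      have hv2 : v ≤ 1 := (abs_le.1 hv).2
      apply Set.Countable.mono ?_
        ((Set.countable_range (fun z : ℤ => 2*z*Real.pi + Real.arccos v - a k)).union
          (Set.countable_range (fun z : ℤ => 2*z*Real.pi - Real.arccos v - a k)))
      intro φ hφ
      have h1 : Real.cos (Real.arccos v) = Real.cos (a k + φ) := by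
        rw [Real.cos_arccos hv1 hv2]; exact hφ.symm
      rcases Real.cos_eq_cos_iff.1 h1 with ⟨z, hz | hz⟩
      · exact Or.inl ⟨z, by
          show 2*((z : ℤ):ℝ)*Real.pi + Real.arccos v - a k = φ; push_cast; linarith⟩
      · exact Or.inr ⟨z, by
          show 2*((z : ℤ):ℝ)*Real.pi - Real.arccos v - a k = φ; push_cast; linarith⟩
    · have : {φ : ℝ | Real.cos (a k + φ) = v} = ∅ := by
        ext φ
        simp only [Set.mem_setOf_eq, Set.mem_empty_iff_false, iff_false]
        intro hφ
        have h1 := Real.neg_one_le_cos (a k + φ)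
        have h2 := Real.cos_le_one (a k + φ)
        rw [hφ] at h1 h2
        exact absurd (abs_le.2 ⟨h1, h2⟩) (not_le.2 hv)
      rw [this]
      exact Set.countable_empty
  have hbad : ¬ (Set.univ : Set ℝ) ⊆
      ((⋃ k : ℕ, {φ : ℝ | Real.cos (a k + φ) = v}) ∪
        ((⋃ k : ℕ, {φ : ℝ | Real.sin (b k + φ) = 0}) ∪
          (⋃ k : ℕ, {φ : ℝ | Real.sin (b' k + φ) = 0}))) := by
    intro hsub
    exact Cardinal.not_countable_real
      (Set.Countable.mono hsub (hcos.union ((hsin b).union (hsin b'))))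
  obtain ⟨φ, -, hφ⟩ := Set.not_subset.1 hbad
  simp only [Set.mem_union, Set.mem_iUnion, Set.mem_setOf_eq, not_or, not_exists] at hφ
  exact ⟨φ, hφ.1, hφ.2.1, hφ.2.2⟩


lemma construction (α β γ : ℝ) (hα1 : α ≠ 1) (n : ℕ) (hn : 3 ≤ n) (m : ℕ)
    (hm0 : 0 < m) (hmn : 2 * m < n) (hα : α = Real.cos (Real.pi * m / n) ^ 2)
    (hD : β ^ 2 - 4 * γ * (1 - α) > 0) :
    ∃ A : ℕ → ℝ × ℝ,
      (∀ k, A (k + n) = A k) ∧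
      (∀ k, A k ∈ (conicGamma α β γ).zeroSet) ∧
      (∀ k, parabolaC.Tangent (A k) (A (k + 1))) ∧
      (∀ k, lineThrough (A k) (A (k + 1)) ≠ lineThrough (A (k + 1)) (A (k + 2))) := by
  have hnR : (0:ℝ) < n := by positivity
  have hπ := Real.pi_pos
  set θ : ℝ := 2 * Real.pi * m / n with hθdef
  have hθ0 : 0 < θ := by positivity
  have hθπ : θ < Real.pi := by
    rw [hθdef, div_lt_iff₀ hnR]
    have : (2 * m : ℝ) < n := by exact_mod_cast hmn
    nlinarith
  have hsθ : 0 < Real.sin θ := Real.sin_pos_of_pos_of_lt_pi hθ0 hθπ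
  have hcθ : Real.cos θ = 2 * α - 1 := by
    have h2 : θ = 2 * (Real.pi * m / n) := by rw [hθdef]; ring
    rw [h2, Real.cos_two_mul, ← hα]
  have h1α : 0 < 1 - α := by nlinarith [Real.sin_sq_add_cos_sq θ]
  set K : ℝ := (β ^ 2 - 4 * γ * (1 - α)) / (1 - α) with hKdef
  have hK0 : 0 < K := div_pos hD h1α
  set r : ℝ := Real.sqrt K / Real.sin θ with hrdef
  have hr0 : 0 < r := div_pos (Real.sqrt_pos.2 hK0) hsθ
  have hr2 : r ^ 2 * Real.sin θ ^ 2 = K := by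
    rw [hrdef]
    rw [div_pow, div_mul_cancel₀ _ (by positivity : Real.sin θ ^ 2 ≠ 0), Real.sq_sqrt hK0.le]
  set xs : ℝ := β / (2 * (α - 1)) with hxsdef
  have hα1' : α - 1 ≠ 0 := sub_ne_zero.2 hα1
  have hxs : 2 * (α - 1) * xs = β := by rw [hxsdef]; field_simp
  obtain ⟨φ, hφ1, hφ2, hφ3⟩ := exists_good_phi (-xs / r) (fun k => k * θ) (fun k => k * θ)
    (fun k => k * θ + θ / 2)
  set x : ℕ → ℝ := fun k => xs + r * Real.cos (k * θ + φ) with hxdef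
  have hx0 : ∀ k, x k ≠ 0 := by
    intro k h
    apply hφ1 k
    rw [hxdef] at h
    simp only at h
    rw [eq_div_iff (ne_of_gt hr0)]
    linear_combination h
  have hnθ : (n : ℝ) * θ = 2 * Real.pi * m := by rw [hθdef]; field_simp
  have hxper : ∀ k, x (k + n) = x k := by
    intro k
    rw [hxdef]
    simp only
    congr 1
    rw [show ((k + n : ℕ) : ℝ) * θ + φ = ((k : ℝ) * θ + φ) + (m : ℤ) * (2 * Real.pi) by
      push_cast; linear_combination hnθ]
    rw [Real.cos_add_int_mul_two_pi]
  -- the key quadratic relation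
  have hgid : ∀ u v : ℝ, gG α β γ (xs + u) (xs + v)
      = u ^ 2 + v ^ 2 - (4 * α - 2) * u * v - K := by
    intro u v
    rw [hKdef, hxsdef]
    unfold gG
    field_simp
    ring
  have hG : ∀ k, gG α β γ (x k) (x (k + 1)) = 0 := by
    intro k
    rw [hxdef]
    simp only
    rw [hgid]
    have hca : Real.cos (((k + 1 : ℕ) : ℝ) * θ + φ)
        = Real.cos ((k : ℝ) * θ + φ) * Real.cos θ - Real.sin ((k : ℝ) * θ + φ) * Real.sin θ := by
      rw [show ((k + 1 : ℕ) : ℝ) * θ + φ = ((k : ℝ) * θ + φ) + θ by push_cast; ring,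
        Real.cos_add]
    rw [hca]
    have h1 := Real.sin_sq_add_cos_sq ((k : ℝ) * θ + φ)
    have h2 := Real.sin_sq_add_cos_sq θ
    have hc4 : 4 * α - 2 = 2 * Real.cos θ := by linarith
    rw [hc4]
    linear_combination r ^ 2 * Real.sin θ ^ 2 * h1 - r ^ 2 * Real.cos ((k : ℝ) * θ + φ) ^ 2 * h2 + hr2
  -- consecutive and second-neighbour distinctness
  have hd1 : ∀ k : ℕ, x (k + 1) ≠ x k := by
    intro k h
    rw [hxdef] at h
    simp only at h
    have h2 : Real.cos (((k + 1 : ℕ) : ℝ) * θ + φ) - Real.cos ((k : ℝ) * θ + φ) = 0 := by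
      have h' : r * Real.cos (((k + 1 : ℕ) : ℝ) * θ + φ) = r * Real.cos ((k : ℝ) * θ + φ) := by
        linarith
      have := mul_left_cancel₀ (ne_of_gt hr0) h'
      linarith
    rw [Real.cos_sub_cos] at h2
    have h3 : ((((k + 1 : ℕ) : ℝ) * θ + φ) + ((k : ℝ) * θ + φ)) / 2
        = ((k : ℝ) * θ + θ / 2 + φ) := by push_cast; ring
    have h4 : ((((k + 1 : ℕ) : ℝ) * θ + φ) - ((k : ℝ) * θ + φ)) / 2 = θ / 2 := by push_cast; ring
    rw [h3, h4] at h2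
    have h5 : 0 < Real.sin (θ / 2) :=
      Real.sin_pos_of_pos_of_lt_pi (by linarith) (by linarith)
    have h6 := hφ3 k
    rcases mul_eq_zero.1 h2 with h7 | h7
    · rcases mul_eq_zero.1 h7 with h8 | h8
      · norm_num at h8
      · exact h6 h8
    · exact (ne_of_gt h5) h7
  have hd2 : ∀ k : ℕ, x (k + 2) ≠ x k := by
    intro k h
    rw [hxdef] at h
    simp only at h
    have h2 : Real.cos (((k + 2 : ℕ) : ℝ) * θ + φ) - Real.cos ((k : ℝ) * θ + φ) = 0 := by
      have h' : r * Real.cos (((k + 2 : ℕ) : ℝ) * θ + φ) = r * Real.cos ((k : ℝ) * θ + φ) := by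
        linarith
      have := mul_left_cancel₀ (ne_of_gt hr0) h'
      linarith
    rw [Real.cos_sub_cos] at h2
    have h3 : ((((k + 2 : ℕ) : ℝ) * θ + φ) + ((k : ℝ) * θ + φ)) / 2
        = (((k + 1 : ℕ) : ℝ) * θ + φ) := by push_cast; ring
    have h4 : ((((k + 2 : ℕ) : ℝ) * θ + φ) - ((k : ℝ) * θ + φ)) / 2 = θ := by push_cast; ring
    rw [h3, h4] at h2
    have h6 := hφ2 (k + 1)
    rcases mul_eq_zero.1 h2 with h7 | h7
    · rcases mul_eq_zero.1 h7 with h8 | h8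
      · norm_num at h8
      · exact h6 h8
    · exact (ne_of_gt hsθ) h7
  -- tangency parameters
  set s : ℕ → ℝ := fun k => (x k)⁻¹ with hsdef
  have hs0 : ∀ k, s k ≠ 0 := fun k => inv_ne_zero (hx0 k)
  have hsper : ∀ k, s (k + n) = s k := fun k => by rw [hsdef]; simp only [hxper k]
  have hsd1 : ∀ k, s (k + 1) ≠ s k := fun k h => hd1 k (inv_injective h)
  have hsd2 : ∀ k, s (k + 2) ≠ s k := fun k h => hd2 k (inv_injective h)
  have hinv : ∀ k, 1 / s k = x k := fun k => by rw [hsdef]; simp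
  -- the polygon
  set A : ℕ → ℝ × ℝ := fun k => ((s (k + (n - 1)) + s k) / 2, s (k + (n - 1)) * s k) with hAdef
  have hAvert : ∀ k, A (k + 1) = ((s k + s (k + 1)) / 2, s k * s (k + 1)) := by
    intro k
    rw [hAdef]
    simp only
    rw [show k + 1 + (n - 1) = k + n by omega, hsper k]
  have hAfst : ∀ k, (A k).1 = (s (k + (n - 1)) + s k) / 2 := fun k => rfl
  have hAsnd : ∀ k, (A k).2 = s (k + (n - 1)) * s k := fun k => rfl
  refine ⟨A, ?_, ?_, ?_, ?_⟩
  · intro k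
    rw [hAdef]
    simp only
    rw [show k + n + (n - 1) = k + (n - 1) + n by omega, hsper, hsper]
  · intro k
    show (conicGamma α β γ).eval (A k) = 0
    have hk : k = (k + (n - 1)) + 1 - n := by omega
    have hxk : x k = x ((k + (n - 1)) + 1) := by
      rw [show k + (n - 1) + 1 = k + n by omega, hxper]
    rw [hAdef]
    simp only
    apply (gamma_mem_iff α β γ _ _ (hs0 _) (hs0 _)).2
    rw [hinv, hinv, hxk]
    exact hG (k + (n - 1))
  · intro k
    apply tangent_of_param (s k)
    · rw [hAvert k, hAfst k]
      simp only
      intro h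
      apply hsd2 (k + (n - 1))
      have : s (k + (n - 1)) = s (k + 1) := by linarith
      rw [this, show k + (n - 1) + 2 = (k + 1) + n by omega, hsper]
    · rw [hAfst k, hAsnd k]; ring
    · rw [hAvert k]
      simp only
      ring
  · intro k hline
    have hA1 : (A k).1 ≠ (A (k + 1)).1 := by
      rw [hAvert k, hAfst k]
      simp only
      intro h
      apply hsd2 (k + (n - 1))
      have : s (k + (n - 1)) = s (k + 1) := by linarith
      rw [this, show k + (n - 1) + 2 = (k + 1) + n by omega, hsper]
    have hA2 : (A (k + 1)).1 ≠ (A (k + 2)).1 := by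
      rw [hAvert k, hAvert (k + 1)]
      simp only
      intro h
      apply hsd2 k
      have : s k = s (k + 2) := by linarith
      exact this.symm
    have hL1 : lineThrough (A k) (A (k + 1)) = tangentLine (s k) := by
      apply lineThrough_eq_tangentLine (s k) hA1
      · rw [hAfst k, hAsnd k]; ring
      · rw [hAvert k]; simp only; ring
    have hL2 : lineThrough (A (k + 1)) (A (k + 2)) = tangentLine (s (k + 1)) := by
      apply lineThrough_eq_tangentLine (s (k + 1)) hA2
      · rw [hAvert k]; simp only; ring
      · rw [hAvert (k + 1)]; simp only; ring
    rw [hL1, hL2] at hline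
    exact hsd1 k (tangentLine_injective hline).symm


lemma forward (α β γ : ℝ) (hα0 : α ≠ 0) (hα1 : α ≠ 1) (n : ℕ) (hn : 3 ≤ n)
    (A : ℕ → ℝ × ℝ) (hper : ∀ k, A (k + n) = A k)
    (hmem : ∀ k, A k ∈ (conicGamma α β γ).zeroSet)
    (htan : ∀ k, parabolaC.Tangent (A k) (A (k + 1)))
    (hline : ∀ k, lineThrough (A k) (A (k + 1)) ≠ lineThrough (A (k + 1)) (A (k + 2))) :
    (∃ m : ℕ, 0 < m ∧ 2 * m < n ∧ α = Real.cos (Real.pi * m / n) ^ 2) ∧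
      β ^ 2 - 4 * γ * (1 - α) > 0 := by
  have hn0 : (0:ℝ) < n := by positivity
  have hα1' : α - 1 ≠ 0 := sub_ne_zero.2 hα1
  choose sP hne h1 h2 using fun k => tangent_param (htan k)
  have hsper : ∀ k, sP (k + n) = sP k := by
    intro k
    have e1 := h1 (k + n); rw [hper k] at e1
    have e2 := h2 (k + n); rw [show k + n + 1 = (k + 1) + n by omega, hper (k + 1)] at e2
    exact tangent_param_unique (hne k) e1 e2 (h1 k) (h2 k)
  have hss : ∀ k, sP k ≠ sP (k + 1) := by
    intro k h
    apply hline k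
    rw [lineThrough_eq_tangentLine (sP k) (hne k) (h1 k) (h2 k),
      lineThrough_eq_tangentLine (sP (k + 1)) (hne (k + 1)) (h1 (k + 1)) (h2 (k + 1)), h]
  have hvert : ∀ k, (A (k + 1)).1 = (sP k + sP (k + 1)) / 2 ∧ (A (k + 1)).2 = sP k * sP (k + 1) :=
    fun k => vertex_coords (hss k) (h2 k) (h1 (k + 1))
  have hmem' : ∀ k, (conicGamma α β γ).eval ((sP k + sP (k + 1)) / 2, sP k * sP (k + 1)) = 0 := by
    intro k
    have h := hmem (k + 1)
    have e : ((sP k + sP (k + 1)) / 2, sP k * sP (k + 1)) = A (k + 1) :=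
      Prod.ext (hvert k).1.symm (hvert k).2.symm
    rw [e]
    exact h
  have hs0 : ∀ k, sP k ≠ 0 := fun k => (params_ne_zero α β γ _ _ (hss k) (hmem' k)).1
  set x : ℕ → ℝ := fun k => 1 / sP k with hxdef
  have hGx : ∀ k, gG α β γ (x k) (x (k + 1)) = 0 :=
    fun k => (gamma_mem_iff α β γ _ _ (hs0 k) (hs0 (k + 1))).1 (hmem' k)
  have hsne2 : ∀ k, sP (k + 2) ≠ sP k := by
    intro k h
    apply (htan (k + 1)).1
    refine Prod.ext ?_ ?_
    · rw [(hvert k).1, (hvert (k + 1)).1, h]; ring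
    · rw [(hvert k).2, (hvert (k + 1)).2, h]; ring
  have hx2 : ∀ k, x (k + 2) ≠ x k := by
    intro k h
    apply hsne2 k
    have h' : 1 / sP (k + 2) = 1 / sP k := h
    rw [← one_div_one_div (sP (k + 2)), h', one_div_one_div]
  have hxper : ∀ k, x (k + n) = x k := by
    intro k
    show 1 / sP (k + n) = 1 / sP k
    rw [hsper k]
  have hrec : ∀ k, x (k + 2) = (4 * α - 2) * x (k + 1) - x k - 2 * β := by
    intro k
    have key : (x (k + 2) - x k) * (x (k + 2) + x k - (4 * α - 2) * x (k + 1) + 2 * β) = 0 := by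
      have g1 := hGx k; have g2 := hGx (k + 1)
      unfold gG at g1 g2
      linear_combination g2 - g1
    rcases mul_eq_zero.1 key with hcase | hcase
    · exact absurd (sub_eq_zero.1 hcase) (hx2 k)
    · linarith
  set xs : ℝ := β / (2 * (α - 1)) with hxsdef
  have hxs : 2 * (α - 1) * xs = β := by rw [hxsdef]; field_simp
  set y : ℕ → ℝ := fun k => x k - xs with hydef
  have hrecy : ∀ k, y (k + 2) = (4 * α - 2) * y (k + 1) - y k := by
    intro k
    show x (k + 2) - xs = (4 * α - 2) * (x (k + 1) - xs) - (x k - xs)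
    linear_combination (hrec k) + 2 * hxs
  have hyper : ∀ k, y (k + n) = y k := by
    intro k
    show x (k + n) - xs = x k - xs
    rw [hxper k]
  have hy01 : ¬ (y 0 = 0 ∧ y 1 = 0) := by
    rintro ⟨hy0, hy1⟩
    have hall := zero_of_rec _ y hrecy hy0 hy1
    apply hx2 0
    have a2 : x 2 - xs = 0 := hall 2
    have a0 : x 0 - xs = 0 := hall 0
    show x 2 = x 0
    linarith
  have hclt : |4 * α - 2| < 2 := by
    by_contra hcon
    push_neg at hcon
    have hgt : 2 < |4 * α - 2| := by
      rcases lt_or_eq_of_le hcon with h | h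
      · exact h
      · exfalso
        rcases (abs_eq (by norm_num : (0:ℝ) ≤ 2)).1 h.symm with h' | h'
        · exact hα1 (by linarith)
        · exact hα0 (by linarith)
    have hall := big_c_case _ hgt n (by omega) y hrecy hyper
    exact hy01 ⟨hall 0, hall 1⟩
  have hQpos : 0 < y 0 ^ 2 + y 1 ^ 2 - (4 * α - 2) * y 0 * y 1 := by
    rcases eq_or_ne (y 1) 0 with hy1 | hy1
    · have hy0 : y 0 ≠ 0 := fun h => hy01 ⟨h, hy1⟩
      have hp : 0 < y 0 ^ 2 := lt_of_le_of_ne (sq_nonneg _) (Ne.symm (pow_ne_zero 2 hy0))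
      rw [hy1]
      nlinarith
    · have hp : 0 < y 1 ^ 2 := lt_of_le_of_ne (sq_nonneg _) (Ne.symm (pow_ne_zero 2 hy1))
      have hc2 : (4 * α - 2) ^ 2 < 4 := by nlinarith [abs_lt.1 hclt, sq_abs (4 * α - 2)]
      nlinarith [sq_nonneg (2 * y 0 - (4 * α - 2) * y 1)]
  have h1α : 0 < 1 - α := by
    rcases abs_lt.1 hclt with ⟨ha, hb⟩
    linarith
  have hgid : ∀ u v : ℝ, gG α β γ (xs + u) (xs + v)
      = u ^ 2 + v ^ 2 - (4 * α - 2) * u * v - (β ^ 2 - 4 * γ * (1 - α)) / (1 - α) := by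
    intro u v
    rw [hxsdef]
    unfold gG
    field_simp
    ring
  have hKval : y 0 ^ 2 + y 1 ^ 2 - (4 * α - 2) * y 0 * y 1
      = (β ^ 2 - 4 * γ * (1 - α)) / (1 - α) := by
    have g0 := hGx 0
    have e0 : x 0 = xs + y 0 := by show x 0 = xs + (x 0 - xs); ring
    have e1 : x 1 = xs + y 1 := by show x 1 = xs + (x 1 - xs); ring
    rw [e0, e1, hgid] at g0
    linarith
  have hb : β ^ 2 - 4 * γ * (1 - α) > 0 := by
    have e : β ^ 2 - 4 * γ * (1 - α)
        = (y 0 ^ 2 + y 1 ^ 2 - (4 * α - 2) * y 0 * y 1) * (1 - α) := by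
      rw [hKval]
      field_simp
    rw [e]
    exact mul_pos hQpos h1α
  obtain ⟨θ, hcθ, hθ0, hθπ, m, hm⟩ :=
    small_c_case (4 * α - 2) hclt n (by omega) y hrecy hyper hy01
  have hmpos : 0 < m := by
    by_contra hcon
    push_neg at hcon
    have hmr : (m : ℝ) ≤ 0 := by exact_mod_cast hcon
    have hnθ : (0:ℝ) < (n : ℝ) * θ := mul_pos hn0 hθ0
    rw [hm] at hnθ
    nlinarith [Real.pi_pos]
  have hmlt : 2 * (m : ℝ) < n := by
    have hlt : (n : ℝ) * θ < (n : ℝ) * Real.pi := by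
      exact mul_lt_mul_of_pos_left hθπ hn0
    rw [hm] at hlt
    nlinarith [Real.pi_pos]
  have hmltZ : 2 * m < (n : ℤ) := by exact_mod_cast hmlt
  refine ⟨⟨m.toNat, by omega, by omega, ?_⟩, hb⟩
  have hmR : ((m.toNat : ℕ) : ℝ) = (m : ℝ) := by
    rw [← Int.toNat_of_nonneg hmpos.le]
    push_cast
    rw [Int.toNat_of_nonneg hmpos.le]
  rw [hmR]
  have hθval : θ = 2 * (Real.pi * m / n) := by
    field_simp
    linear_combination hm
  have hcos2 : Real.cos θ = 2 * Real.cos (Real.pi * m / n) ^ 2 - 1 := by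
    rw [hθval, Real.cos_two_mul]
  rw [hcos2] at hcθ
  linarith

end StatementFiveProof

/-- For the conics `𝒞 : y = x²` and `Γ : α y = x² + β x y + γ y²`
(`α ≠ 0`, `α ≠ 1`) and an integer `n ≥ 3`, there is a closed polygonal line with `n` sides
inscribed in `Γ` and circumscribed about `𝒞` iff (a) `α = cos²(π m / n)` for some positive
integer `m` with `2 m < n`, and (b) `β² − 4 γ (1 − α) > 0`. -/
theorem statement5 (α β γ : ℝ) (hα0 : α ≠ 0) (hα1 : α ≠ 1) (n : ℕ) (hn : 3 ≤ n) :
    (∃ A : ℕ → ℝ × ℝ,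
        (∀ k, A (k + n) = A k) ∧
        (∀ k, A k ∈ (conicGamma α β γ).zeroSet) ∧
        (∀ k, parabolaC.Tangent (A k) (A (k + 1))) ∧
        (∀ k, lineThrough (A k) (A (k + 1)) ≠ lineThrough (A (k + 1)) (A (k + 2)))) ↔
      ((∃ m : ℕ, 0 < m ∧ 2 * m < n ∧ α = Real.cos (Real.pi * m / n) ^ 2) ∧
        β ^ 2 - 4 * γ * (1 - α) > 0) := by
  constructor
  · rintro ⟨A, hper, hmem, htan, hline⟩
    exact forward α β γ hα0 hα1 n hn A hper hmem htan hline
  · rintro ⟨⟨m, hm0, hmn, hα⟩, hD⟩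
    exact construction α β γ hα1 n hn m hm0 hmn hα hD
end

section
/- Let α ∈ ℝ with 0 < α < 1, let t = √(1/α − 1), and let n be a positive integer. Then the complex number (1 − t·i)/(1 + t·i) satisfies ((1 − t·i)/(1 + t·i))ⁿ = 1 if and only if there exists a positive integer m with 2m < n such that α = cos²(πm/n). -/
set_option maxHeartbeats 1000000 in
/-- For `0 < α < 1`, `t = √(1/α − 1)` and a positive integer `n`, the complex
number `(1 − t i)/(1 + t i)` is an `n`-th root of unity iff `α = cos²(π m / n)` for some
positive integer `m` with `2 m < n`. -/
theorem statement6 (α : ℝ) (hα0 : 0 < α) (hα1 : α < 1)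
    (t : ℝ) (ht : t = Real.sqrt (1 / α - 1)) (n : ℕ) (hn : 0 < n) :
    ((1 - (t : ℂ) * Complex.I) / (1 + (t : ℂ) * Complex.I)) ^ n = 1 ↔
      ∃ m : ℕ, 0 < m ∧ 2 * m < n ∧ α = Real.cos (Real.pi * m / n) ^ 2 := by
  have hπ := Real.pi_pos
  have hnR : (0:ℝ) < n := by exact_mod_cast hn
  have hnC : (n:ℂ) ≠ 0 := Nat.cast_ne_zero.mpr hn.ne'
  have hpos : 0 < 1 / α - 1 := by
    have : 1 < 1 / α := (one_lt_div hα0).mpr hα1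
    linarith
  have ht0 : 0 < t := ht ▸ Real.sqrt_pos.mpr hpos
  have ht2 : t ^ 2 = 1 / α - 1 := by rw [ht]; exact Real.sq_sqrt hpos.le
  set θ := Real.arctan t with hθdef
  have hθ0 : 0 < θ := by
    have := Real.arctan_strictMono ht0
    rwa [Real.arctan_zero] at this
  have hθπ : θ < Real.pi / 2 := Real.arctan_lt_pi_div_two t
  set s := Real.sqrt (1 + t ^ 2) with hsdef
  have hs0 : 0 < s := Real.sqrt_pos.mpr (by positivity)
  have hs2 : s ^ 2 = 1 + t ^ 2 := Real.sq_sqrt (by positivity)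
  have hcos : Real.cos θ = 1 / s := Real.cos_arctan t
  have hsin : Real.sin θ = t / s := Real.sin_arctan t
  have hαcos : α = Real.cos θ ^ 2 := by
    rw [hcos, div_pow, one_pow, hs2, ht2]
    field_simp
    ring
  have hsC : (s : ℂ) ≠ 0 := by exact_mod_cast hs0.ne'
  have h1 : (1 + (t : ℂ) * Complex.I) = (s : ℂ) * Complex.exp (θ * Complex.I) := by
    rw [Complex.exp_mul_I, ← Complex.ofReal_cos, ← Complex.ofReal_sin, hcos, hsin]
    push_cast
    field_simp
  have h2 : (1 - (t : ℂ) * Complex.I) = (s : ℂ) * Complex.exp (-θ * Complex.I) := by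
    rw [Complex.exp_mul_I, Complex.cos_neg, Complex.sin_neg,
      ← Complex.ofReal_cos, ← Complex.ofReal_sin, hcos, hsin]
    push_cast
    field_simp
    ring
  have hz : (1 - (t : ℂ) * Complex.I) / (1 + (t : ℂ) * Complex.I)
      = Complex.exp (((-2 * θ : ℝ) : ℂ) * Complex.I) := by
    rw [h1, h2, mul_div_mul_left _ _ hsC, ← Complex.exp_sub]
    congr 1
    push_cast
    ring
  rw [hz, ← Complex.exp_nat_mul, Complex.exp_eq_one_iff]
  constructor
  · rintro ⟨k, hk⟩
    have hreal : (n : ℝ) * (-2 * θ) = k * (2 * Real.pi) := by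
      have h' : (((n : ℝ) * (-2 * θ) : ℝ) : ℂ) * Complex.I
          = (((k : ℝ) * (2 * Real.pi) : ℝ) : ℂ) * Complex.I := by
        push_cast
        push_cast at hk
        linear_combination hk
      exact_mod_cast mul_right_cancel₀ Complex.I_ne_zero h'
    have hkneg : (0 : ℝ) < -(k : ℝ) := by nlinarith
    have hk0 : k < 0 := by exact_mod_cast (by linarith : (k:ℝ) < 0)
    have hmR : ((-k).toNat : ℝ) = -(k : ℝ) := by
      exact_mod_cast Int.toNat_of_nonneg (by omega : (0:ℤ) ≤ -k)
    refine ⟨(-k).toNat, by omega, ?_, ?_⟩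
    · have hθeq : (n : ℝ) * θ = Real.pi * (-(k : ℝ)) := by linarith
      have hlt : Real.pi * (-(k:ℝ)) < (n : ℝ) * (Real.pi / 2) := by
        rw [← hθeq]
        exact mul_lt_mul_of_pos_left hθπ hnR
      have h2m : 2 * ((-k).toNat : ℝ) < (n : ℝ) := by
        rw [hmR]; nlinarith
      exact_mod_cast h2m
    · have hθeq : θ = Real.pi * ((-k).toNat : ℝ) / n := by
        rw [hmR]; field_simp; linarith
      rw [← hθeq]; exact hαcos
  · rintro ⟨m, hm0, hmn, hα⟩
    set φ := Real.pi * m / n with hφdef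
    have hφ0 : 0 < φ := by
      apply div_pos (mul_pos hπ (by exact_mod_cast hm0)) hnR
    have hφπ : φ < Real.pi / 2 := by
      rw [hφdef, div_lt_div_iff₀ hnR (by norm_num : (0:ℝ) < 2)]
      have : (2 * m : ℝ) < n := by exact_mod_cast hmn
      nlinarith
    have hcosφ : 0 < Real.cos φ := Real.cos_pos_of_mem_Ioo ⟨by linarith, hφπ⟩
    have htan : t = Real.tan φ := by
      have h1α : 1 / α - 1 = Real.tan φ ^ 2 := by
        rw [hα, Real.tan_eq_sin_div_cos, div_pow]
        have hc2 : Real.cos φ ^ 2 ≠ 0 := by positivity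
        field_simp
        nlinarith [Real.sin_sq_add_cos_sq φ]
      rw [ht, h1α, Real.sqrt_sq
        (Real.tan_nonneg_of_nonneg_of_le_pi_div_two hφ0.le hφπ.le)]
    have hθφ : θ = φ := by
      rw [hθdef, htan, Real.arctan_tan (by linarith) hφπ]
    refine ⟨-m, ?_⟩
    rw [hθφ, hφdef]
    push_cast
    field_simp
end

section
/- There do not exist polynomials R, S ∈ ℝ[X] with S ≠ 0 such that R(X)² − X(X + 1)·S(X)² = 1 as an identity of polynomials and S(−1) = 0. -/
open Polynomial

/-- There are no polynomials `R, S ∈ ℝ[X]` with `S ≠ 0` satisfying the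
polynomial Pell equation `R² − X (X + 1) S² = 1` together with `S(−1) = 0`. -/
theorem statement8 :
    ¬ ∃ R S : Polynomial ℝ, S ≠ 0 ∧
        R ^ 2 - Polynomial.X * (Polynomial.X + 1) * S ^ 2 = 1 ∧
        Polynomial.eval (-1 : ℝ) S = 0 := by
  rintro ⟨R, S, hS, heq, hSe⟩
  -- evaluate at -1 : R(-1)^2 = 1
  have hR1 : (R.eval (-1 : ℝ)) ^ 2 = 1 := by
    have := congrArg (Polynomial.eval (-1 : ℝ)) heq
    simp [hSe] at this
    rcases this with h | h <;> rw [h] <;> norm_num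
  have hRne : R.eval (-1 : ℝ) ≠ 0 := by
    intro h; rw [h] at hR1; norm_num at hR1
  -- basic nonvanishing and degree facts about X(X+1)
  have hX1 : ((X : ℝ[X]) + 1) ≠ 0 := by
    intro h
    have := congrArg (Polynomial.eval (1 : ℝ)) h
    norm_num at this
  have hXX : (X : ℝ[X]) * (X + 1) ≠ 0 := mul_ne_zero X_ne_zero hX1
  have hXXdeg : natDegree ((X : ℝ[X]) * (X + 1)) = 2 := by
    rw [natDegree_mul X_ne_zero hX1, natDegree_X,
      show ((X : ℝ[X]) + 1) = X + C 1 by norm_num, natDegree_X_add_C]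
  -- the derivative identity
  have hE : 2 * R * derivative R
      = S * ((2 * X + 1) * S + 2 * (X * (X + 1)) * derivative S) := by
    have h := congrArg derivative heq
    simp only [derivative_sub, derivative_one, derivative_pow, derivative_mul,
      derivative_X, derivative_add, derivative_one] at h
    simp only [Nat.cast_ofNat, map_ofNat] at h
    linear_combination h
  -- coprimality of S and R
  have hcop : IsCoprime S R := by
    refine ⟨-(X * (X + 1) * S), R, ?_⟩
    linear_combination heq
  have hcop2 : IsCoprime S (2 * R) := by
    refine IsCoprime.mul_right ⟨0, C (1/2 : ℝ), ?_⟩ hcop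
    rw [show (2 : ℝ[X]) = C 2 from (map_ofNat C 2).symm, zero_mul, zero_add, ← C_mul]
    norm_num
  have hdvd : S ∣ derivative R :=
    hcop2.dvd_of_dvd_mul_left
      ⟨(2 * X + 1) * S + 2 * (X * (X + 1)) * derivative S, by linear_combination hE⟩
  obtain ⟨q, hq⟩ := hdvd
  -- cancel S in the derivative identity
  have hq2 : 2 * R * q = (2 * X + 1) * S + 2 * (X * (X + 1)) * derivative S := by
    have : S * (2 * R * q) = S * ((2 * X + 1) * S + 2 * (X * (X + 1)) * derivative S) := by
      rw [← hE, hq]; ring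
    exact mul_left_cancel₀ hS this
  -- evaluating hq2 at -1 gives q(-1) = 0
  have hqe : q.eval (-1 : ℝ) = 0 := by
    have := congrArg (Polynomial.eval (-1 : ℝ)) hq2
    simp [hSe] at this
    rcases this with h | h
    · exact absurd h hRne
    · exact h
  by_cases hR' : derivative R = 0
  · -- R constant, so X(X+1)S² = 0, contradiction
    have hRc : R = C (R.coeff 0) :=
      eq_C_of_natDegree_eq_zero (natDegree_eq_zero_of_derivative_eq_zero hR')
    have ha : (R.coeff 0) ^ 2 = 1 := by
      have := hR1; rw [hRc] at this; simpa using this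
    have hzero : (X : ℝ[X]) * (X + 1) * S ^ 2 = 0 := by
      have h1 : (X : ℝ[X]) * (X + 1) * S ^ 2 = R ^ 2 - 1 := by linear_combination -heq
      rw [h1, hRc, ← C_pow, ha]; simp
    exact (mul_ne_zero hXX (pow_ne_zero 2 hS)) hzero
  · -- deg R = deg S + 1, so q is a nonzero constant; but q(-1)=0
    have hqne : q ≠ 0 := by
      intro h; rw [h, mul_zero] at hq; exact hR' hq
    have hDS : natDegree ((X : ℝ[X]) * (X + 1) * S ^ 2) = 2 + 2 * natDegree S := by
      rw [natDegree_mul hXX (pow_ne_zero 2 hS), natDegree_pow, hXXdeg]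
    have hdegR : natDegree R = natDegree S + 1 := by
      have h1 : R ^ 2 = 1 + X * (X + 1) * S ^ 2 := by linear_combination heq
      have h2 : natDegree (R ^ 2) = 2 + 2 * natDegree S := by
        rw [h1, natDegree_add_eq_right_of_natDegree_lt, hDS]
        rw [hDS]; simp
      rw [natDegree_pow] at h2; omega
    have hlt : natDegree (derivative R) < natDegree R :=
      natDegree_derivative_lt (by omega)
    have hq0 : natDegree q = 0 := by
      have := natDegree_mul hS hqne
      rw [← hq] at this
      omega
    have hqC : q = C (q.coeff 0) := eq_C_of_natDegree_eq_zero hq0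
    rw [hqC] at hqe
    simp at hqe
    exact hqne (by rw [hqC, hqe, map_zero])
end

section
/- Let α ≥ 0 and let Γ ⊂ ℝ² be the unit circle x² + y² = 1. Consider polygonal lines (A_k) of points of Γ with A_k ≠ A_{k+1} for all k, whose sides are alternately parallel to the vectors (1, 0) and (α, 1). Set θ = arctan(1/α) for α > 0 and θ = π/2 for α = 0. Then: (i) no such polygonal line is closed with an odd number of sides; (ii) for an integer n ≥ 2, there exists a closed such polygonal line with exactly 2n sides if and only if θ = kπ/n for some integer k with 1 ≤ k < n and gcd(k, n) = 1. -/
open Filter Topology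

/-- Two vectors of `ℝ²` are parallel (cross product zero). -/
def IsPar (u v : ℝ × ℝ) : Prop := u.1 * v.2 = u.2 * v.1

/-- The unit circle in `ℝ²`. -/
def unitCircle : Set (ℝ × ℝ) := {p : ℝ × ℝ | p.1 ^ 2 + p.2 ^ 2 = 1}

/-- The sides of the polygonal line `A` are alternately parallel to `u` and to `v`. -/
def AltParallel (u v : ℝ × ℝ) (A : ℕ → ℝ × ℝ) : Prop :=
  (∀ k : ℕ, IsPar (A (2 * k + 1) - A (2 * k)) u ∧ IsPar (A (2 * k + 2) - A (2 * k + 1)) v) ∨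
  (∀ k : ℕ, IsPar (A (2 * k + 1) - A (2 * k)) v ∧ IsPar (A (2 * k + 2) - A (2 * k + 1)) u)

/-- A closed polygonal line with `m` sides (encoded as an `m`-periodic sequence) inscribed in
the unit circle, whose sides are alternately parallel to `(1, 0)` and `(α, 1)`. -/
def IsClosedAlt (α : ℝ) (m : ℕ) (A : ℕ → ℝ × ℝ) : Prop :=
  (∀ k, A k ∈ unitCircle) ∧
  (∀ k, A k ≠ A (k + 1)) ∧
  AltParallel (1, 0) (α, 1) A ∧
  (∀ k, A (k + m) = A k)

-- auxiliary

noncomputable def Rot (φ : ℝ) (p : ℝ × ℝ) : ℝ × ℝ :=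
  (Real.cos φ * p.1 - Real.sin φ * p.2, Real.sin φ * p.1 + Real.cos φ * p.2)

lemma Rot_add (a b : ℝ) (p : ℝ × ℝ) : Rot (a + b) p = Rot a (Rot b p) := by
  simp only [Rot, Real.cos_add, Real.sin_add]
  exact Prod.ext (by ring) (by ring)

lemma Rot_zero (p : ℝ × ℝ) : Rot 0 p = p := by
  simp [Rot]

lemma Rot_int (m : ℤ) (p : ℝ × ℝ) : Rot (m * (2 * Real.pi)) p = p := by
  have hs : Real.sin (m * (2 * Real.pi)) = 0 := by
    have h : (m : ℝ) * (2 * Real.pi) = ((2 * m : ℤ) : ℝ) * Real.pi := by push_cast; ring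
    rw [h, Real.sin_int_mul_pi]
  simp [Rot, Real.cos_int_mul_two_pi, hs]

lemma rot_fixed {φ : ℝ} {p : ℝ × ℝ} (hp : p ∈ unitCircle) (h : Rot φ p = p) :
    Real.cos φ = 1 := by
  have h1 : Real.cos φ * p.1 - Real.sin φ * p.2 = p.1 := congrArg Prod.fst h
  have h2 : Real.sin φ * p.1 + Real.cos φ * p.2 = p.2 := congrArg Prod.snd h
  have hc : p.1 ^ 2 + p.2 ^ 2 = 1 := hp
  linear_combination p.1 * h1 + p.2 * h2 - (Real.cos φ - 1) * hc

lemma point_eq_angle {a b : ℝ} (h1 : Real.cos a = Real.cos b) (h2 : Real.sin a = Real.sin b) :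
    ∃ m : ℤ, a - b = m * (2 * Real.pi) := by
  have hc : Real.cos (a - b) = 1 := by
    rw [Real.cos_sub, h1, h2]
    nlinarith [Real.sin_sq_add_cos_sq b]
  rcases (Real.cos_eq_one_iff _).1 hc with ⟨m, hm⟩
  exact ⟨m, hm.symm⟩

lemma pi_mul_int_ne {N : ℤ} {n : ℕ} (hn : 0 < n) : Real.pi * N ≠ 2 * n := by
  intro h
  rcases eq_or_ne N 0 with h0 | h0
  · rw [h0] at h
    simp at h
    omega
  · have hN : (N : ℝ) ≠ 0 := Int.cast_ne_zero.mpr h0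
    apply irrational_pi
    refine ⟨(2 * n : ℚ) / (N : ℚ), ?_⟩
    push_cast
    rw [div_eq_iff hN]
    linarith [h]

lemma odd_no_closed {α : ℝ} {m : ℕ} {A : ℕ → ℝ × ℝ} (hm : Odd m)
    (h : IsClosedAlt α m A) : False := by
  obtain ⟨hC, hne, halt, hper⟩ := h
  obtain ⟨t, ht⟩ := hm
  have h00 : A m = A 0 := by simpa using hper 0
  have h10 : A (m + 1) = A 1 := by
    have := hper 1; rwa [add_comm] at this
  apply hne 0
  have hside : A (2 * t + 2) - A (2 * t + 1) = A 1 - A 0 := by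
    have e1 : 2 * t + 1 = m := by omega
    have e2 : 2 * t + 2 = m + 1 := by omega
    rw [e1, e2, h00, h10]
  rcases halt with h | h
  · have p1 : IsPar (A 1 - A 0) (1, 0) := by simpa using (h 0).1
    have p2 : IsPar (A 1 - A 0) (α, 1) := by
      have := (h t).2; rwa [hside] at this
    simp only [IsPar] at p1 p2
    have hx : (A 1 - A 0).2 = 0 := by simpa using p1.symm
    have hy : (A 1 - A 0).1 = 0 := by
      simp only [mul_one] at p2; rw [p2, hx]; ring
    have : A 1 - A 0 = 0 := Prod.ext hy hx
    have := sub_eq_zero.mp this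
    exact this.symm
  · have p1 : IsPar (A 1 - A 0) (α, 1) := by simpa using (h 0).1
    have p2 : IsPar (A 1 - A 0) (1, 0) := by
      have := (h t).2; rwa [hside] at this
    simp only [IsPar] at p1 p2
    have hx : (A 1 - A 0).2 = 0 := by simpa using p2.symm
    have hy : (A 1 - A 0).1 = 0 := by
      simp only [mul_one] at p1; rw [p1, hx]; ring
    have : A 1 - A 0 = 0 := Prod.ext hy hx
    have := sub_eq_zero.mp this
    exact this.symm

lemma horiz_step {p q : ℝ × ℝ} (hp : p ∈ unitCircle) (hq : q ∈ unitCircle)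
    (hne : p ≠ q) (hpar : IsPar (q - p) (1, 0)) : q = (-p.1, p.2) := by
  have hy : q.2 = p.2 := by
    have h := hpar
    simp only [IsPar, Prod.fst_sub, Prod.snd_sub] at h
    linarith
  have hp' : p.1 ^ 2 + p.2 ^ 2 = 1 := hp
  have hq' : q.1 ^ 2 + q.2 ^ 2 = 1 := hq
  have hx : (q.1 - p.1) * (q.1 + p.1) = 0 := by
    linear_combination hq' - hp' - (q.2 + p.2) * hy
  rcases mul_eq_zero.mp hx with h | h
  · exact absurd (Prod.ext (by linarith) hy).symm hne
  · exact Prod.ext (by simp only; linarith) hy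

lemma slant_step {α θ : ℝ} (hs : Real.sin θ ≠ 0) (hcs : Real.cos θ = α * Real.sin θ)
    {p q : ℝ × ℝ} (hp : p ∈ unitCircle) (hq : q ∈ unitCircle) (hne : p ≠ q)
    (hpar : IsPar (q - p) (α, 1)) :
    q = (-(Real.cos (2 * θ)) * p.1 - Real.sin (2 * θ) * p.2,
         -(Real.sin (2 * θ)) * p.1 + Real.cos (2 * θ) * p.2) := by
  set s := Real.sin θ with hsdef
  set c := Real.cos θ with hcdef
  set t := q.2 - p.2 with htdef
  have hx : q.1 - p.1 = α * t := by
    have h := hpar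
    simp only [IsPar, Prod.fst_sub, Prod.snd_sub] at h
    linear_combination h
  have e1 : q.1 = p.1 + α * t := by linear_combination hx
  have e2 : q.2 = p.2 + t := by rw [htdef]; ring
  have hp' : p.1 ^ 2 + p.2 ^ 2 = 1 := hp
  have hq' : q.1 ^ 2 + q.2 ^ 2 = 1 := hq
  have ht0 : t ≠ 0 := by
    intro h
    apply hne
    have h1 : q.1 = p.1 := by rw [h] at e1; linarith
    have h2 : q.2 = p.2 := by rw [h] at e2; linarith
    exact (Prod.ext h1 h2).symm
  have key : t * ((1 + α ^ 2) * t + 2 * (α * p.1 + p.2)) = 0 := by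
    linear_combination hq' - hp' + (-(q.1 + p.1 + α * t)) * hx - (q.2 + p.2 + t) * e2
  have ht : (1 + α ^ 2) * t + 2 * (α * p.1 + p.2) = 0 :=
    (mul_eq_zero.mp key).resolve_left ht0
  have hpy : s ^ 2 + c ^ 2 = 1 := Real.sin_sq_add_cos_sq θ
  have hs2 : s ^ 2 * (1 + α ^ 2) = 1 := by
    linear_combination hpy - (c + α * s) * hcs
  have ht' : t = -(2 * s * c) * p.1 - 2 * s ^ 2 * p.2 := by
    linear_combination s ^ 2 * ht - t * hs2 + 2 * s * p.1 * hcs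
  have h2 : q.2 = -(Real.sin (2 * θ)) * p.1 + Real.cos (2 * θ) * p.2 := by
    rw [Real.sin_two_mul, Real.cos_two_mul, ← hsdef, ← hcdef]
    linear_combination e2 + ht' - 2 * p.2 * hpy
  have h1 : q.1 = -(Real.cos (2 * θ)) * p.1 - Real.sin (2 * θ) * p.2 := by
    rw [Real.sin_two_mul, Real.cos_two_mul, ← hsdef, ← hcdef]
    linear_combination e1 + α * ht' + (2 * c * p.1 + 2 * s * p.2) * hcs
  exact Prod.ext h1 h2

lemma structure_lemma {α θ : ℝ} (hs : Real.sin θ ≠ 0) (hcs : Real.cos θ = α * Real.sin θ)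
    {A : ℕ → ℝ × ℝ} (hC : ∀ k, A k ∈ unitCircle) (hne : ∀ k, A k ≠ A (k + 1))
    (halt : AltParallel (1, 0) (α, 1) A) :
    ∃ ε : ℝ, (ε = 1 ∨ ε = -1) ∧ ∃ F : ℝ × ℝ → ℝ × ℝ,
      (∀ k : ℕ, A (2 * k) = Rot (ε * (2 * k * θ)) (A 0)) ∧
      (∀ k : ℕ, A (2 * k + 1) = F (A (2 * k))) := by
  rcases halt with h | h
  · refine ⟨1, Or.inl rfl, fun p => (-p.1, p.2), ?_, ?_⟩
    · have hH : ∀ k : ℕ, A (2 * k + 1) = (-(A (2 * k)).1, (A (2 * k)).2) := fun k =>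
        horiz_step (hC _) (hC _) (hne (2 * k)) (h k).1
      have hS : ∀ k : ℕ, A (2 * k + 2) =
          (-(Real.cos (2 * θ)) * (A (2 * k + 1)).1 - Real.sin (2 * θ) * (A (2 * k + 1)).2,
           -(Real.sin (2 * θ)) * (A (2 * k + 1)).1 + Real.cos (2 * θ) * (A (2 * k + 1)).2) :=
        fun k => slant_step hs hcs (hC _) (hC _) (hne (2 * k + 1)) (h k).2
      have step : ∀ k : ℕ, A (2 * k + 2) = Rot (2 * θ) (A (2 * k)) := by
        intro k
        rw [hS k, hH k]
        simp only [Rot]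
        exact Prod.ext (by ring) (by ring)
      intro k
      induction k with
      | zero => simp [Rot_zero]
      | succ k ih =>
        have e : 2 * (k + 1) = 2 * k + 2 := by ring
        rw [e, step k, ih, ← Rot_add]
        congr 1
        push_cast
        ring
    · intro k
      have := horiz_step (hC (2 * k)) (hC (2 * k + 1)) (hne (2 * k)) (h k).1
      simpa using this
  · refine ⟨-1, Or.inr rfl, fun p =>
      (-(Real.cos (2 * θ)) * p.1 - Real.sin (2 * θ) * p.2,
       -(Real.sin (2 * θ)) * p.1 + Real.cos (2 * θ) * p.2), ?_, ?_⟩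
    · have hS : ∀ k : ℕ, A (2 * k + 1) =
          (-(Real.cos (2 * θ)) * (A (2 * k)).1 - Real.sin (2 * θ) * (A (2 * k)).2,
           -(Real.sin (2 * θ)) * (A (2 * k)).1 + Real.cos (2 * θ) * (A (2 * k)).2) :=
        fun k => slant_step hs hcs (hC _) (hC _) (hne (2 * k)) (h k).1
      have hH : ∀ k : ℕ, A (2 * k + 2) = (-(A (2 * k + 1)).1, (A (2 * k + 1)).2) := fun k =>
        horiz_step (hC _) (hC _) (hne (2 * k + 1)) (h k).2
      have step : ∀ k : ℕ, A (2 * k + 2) = Rot (-(2 * θ)) (A (2 * k)) := by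
        intro k
        rw [hH k, hS k]
        simp only [Rot, Real.cos_neg, Real.sin_neg]
        exact Prod.ext (by ring) (by ring)
      intro k
      induction k with
      | zero => simp [Rot_zero]
      | succ k ih =>
        have e : 2 * (k + 1) = 2 * k + 2 := by ring
        rw [e, step k, ih, ← Rot_add]
        congr 1
        push_cast
        ring
    · intro k
      exact slant_step hs hcs (hC _) (hC _) (hne (2 * k)) (h k).1

lemma theta_facts {α : ℝ} (hα : 0 ≤ α) {θ : ℝ}
    (hθ : θ = if α = 0 then Real.pi / 2 else Real.arctan (1 / α)) :
    0 < Real.sin θ ∧ Real.cos θ = α * Real.sin θ ∧ 0 < θ ∧ θ ≤ Real.pi / 2 := by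
  by_cases h0 : α = 0
  · rw [if_pos h0] at hθ
    subst hθ h0
    refine ⟨by simp, by simp, by positivity, le_refl _⟩
  · have hαpos : 0 < α := lt_of_le_of_ne hα (Ne.symm h0)
    rw [if_neg h0] at hθ
    subst hθ
    have hx : (0:ℝ) < 1 / α := by positivity
    have hsq : (0:ℝ) < Real.sqrt (1 + (1/α) ^ 2) := by positivity
    have hsin : Real.sin (Real.arctan (1/α)) = (1/α) / Real.sqrt (1 + (1/α)^2) :=
      Real.sin_arctan _
    have hcos : Real.cos (Real.arctan (1/α)) = 1 / Real.sqrt (1 + (1/α)^2) :=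
      Real.cos_arctan _
    refine ⟨?_, ?_, ?_, le_of_lt (Real.arctan_lt_pi_div_two _)⟩
    · rw [hsin]; positivity
    · rw [hsin, hcos]
      field_simp
    · rw [← Real.arctan_zero]
      exact Real.arctan_strictMono hx

lemma forward_dir {α θ : ℝ} (hs : 0 < Real.sin θ) (hcs : Real.cos θ = α * Real.sin θ)
    (hθ1 : 0 < θ) (hθ2 : θ ≤ Real.pi / 2) {n : ℕ} (hn : 2 ≤ n)
    {A : ℕ → ℝ × ℝ} (hA : IsClosedAlt α (2 * n) A)
    (hmin : ∀ j : ℕ, 0 < j → (∀ k, A (k + j) = A k) → 2 * n ≤ j) :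
    ∃ k : ℕ, 1 ≤ k ∧ k < n ∧ Nat.gcd k n = 1 ∧ θ = k * Real.pi / n := by
  obtain ⟨hC, hne, halt, hper⟩ := hA
  obtain ⟨ε, hε, F, hrot, hF⟩ := structure_lemma (ne_of_gt hs) hcs hC hne halt
  have hπ := Real.pi_pos
  have hnR : (0:ℝ) < n := by exact_mod_cast (by omega : 0 < n)
  have hnne : (n:ℝ) ≠ 0 := ne_of_gt hnR
  have h2n : A (2 * n) = A 0 := by simpa using hper 0
  have hfix : Rot (ε * (2 * (n:ℝ) * θ)) (A 0) = A 0 := by rw [← hrot n, h2n]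
  have hcos1 : Real.cos (2 * (n:ℝ) * θ) = 1 := by
    rcases hε with rfl | rfl
    · simpa using rot_fixed (hC 0) hfix
    · have := rot_fixed (hC 0) hfix
      rwa [neg_one_mul, Real.cos_neg] at this
  obtain ⟨m, hm⟩ := (Real.cos_eq_one_iff _).1 hcos1
  have hm0 : 0 < m := by
    by_contra hneg
    push_neg at hneg
    have hmR : (m:ℝ) ≤ 0 := by exact_mod_cast hneg
    nlinarith [hm]
  have hmn : 2 * m ≤ (n:ℤ) := by
    have h2 : ((2 * m : ℤ) : ℝ) ≤ ((n:ℤ) : ℝ) := by push_cast; nlinarith [hm]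
    exact_mod_cast h2
  set k := m.toNat with hk
  have hkmZ : (k:ℤ) = m := Int.toNat_of_nonneg (le_of_lt hm0)
  have hkm : (k:ℝ) = (m:ℝ) := by exact_mod_cast congrArg (fun z : ℤ => (z : ℝ)) hkmZ
  have hk1 : 1 ≤ k := by omega
  have hkn : k < n := by omega
  have hθval : θ * n = k * Real.pi := by
    rw [hkm]
    nlinarith [hm]
  have hgcd : Nat.gcd k n = 1 := by
    by_contra hd
    set d := Nat.gcd k n with hdd
    have hdpos : 0 < d := Nat.gcd_pos_of_pos_right _ (by omega)
    have hd1 : 1 < d := by omega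
    have hdk : d ∣ k := Nat.gcd_dvd_left _ _
    have hdn : d ∣ n := Nat.gcd_dvd_right _ _
    obtain ⟨j', hj'⟩ := hdn
    obtain ⟨k', hk'⟩ := hdk
    have hj'pos : 0 < j' := by
      rcases Nat.eq_zero_or_pos j' with h | h
      · rw [h, Nat.mul_zero] at hj'; omega
      · exact h
    have hj'n : j' < n := by
      have h2j : 2 * j' ≤ d * j' := Nat.mul_le_mul_right _ (by omega)
      calc j' < 2 * j' := by omega
        _ ≤ d * j' := h2j
        _ = n := hj'.symm
    have hjk : (j':ℝ) * k = (n:ℝ) * k' := by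
      have h : j' * k = n * k' := by rw [hj', hk']; ring
      exact_mod_cast h
    have hj2 : (j':ℝ) * θ = (k':ℝ) * Real.pi := by
      have h3 : (n:ℝ) * ((j':ℝ) * θ) = (n:ℝ) * ((k':ℝ) * Real.pi) := by
        linear_combination (j':ℝ) * hθval + Real.pi * hjk
      exact mul_left_cancel₀ hnne h3
    have hrotid : Rot (ε * (2 * (j':ℝ) * θ)) (A 0) = A 0 := by
      rcases hε with rfl | rfl
      · have harg : (1:ℝ) * (2 * (j':ℝ) * θ) = ((k':ℤ) : ℝ) * (2 * Real.pi) := by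
          push_cast
          linear_combination 2 * hj2
        rw [harg, Rot_int]
      · have harg : (-1:ℝ) * (2 * (j':ℝ) * θ) = ((-(k':ℤ) : ℤ) : ℝ) * (2 * Real.pi) := by
          push_cast
          linear_combination (-2) * hj2
        rw [harg, Rot_int]
    have claimE : ∀ u : ℕ, A (2 * (u + j')) = A (2 * u) := by
      intro u
      rw [hrot (u + j'), hrot u]
      have hc : ((u + j' : ℕ) : ℝ) = (u:ℝ) + (j':ℝ) := by push_cast; ring
      have harg : ε * (2 * ((u:ℝ) + (j':ℝ)) * θ) = ε * (2 * (u:ℝ) * θ) + ε * (2 * (j':ℝ) * θ) := by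
        ring
      rw [hc, harg, Rot_add, hrotid]
    have claim : ∀ t : ℕ, A (t + 2 * j') = A t := by
      intro t
      rcases Nat.even_or_odd t with ⟨u, hu⟩ | ⟨u, hu⟩
      · have e1 : t + 2 * j' = 2 * (u + j') := by omega
        have e2 : t = 2 * u := by omega
        rw [e1, e2, claimE u]
      · have e1 : t + 2 * j' = 2 * (u + j') + 1 := by omega
        have e2 : t = 2 * u + 1 := by omega
        rw [e1, e2, hF (u + j'), hF u, claimE u]
    have hge := hmin (2 * j') (by omega) claim
    omega
  refine ⟨k, hk1, hkn, hgcd, ?_⟩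
  field_simp
  linarith [hθval]

lemma slant_par {α θ u : ℝ} (hcs : Real.cos θ = α * Real.sin θ) :
    Real.cos (u + 2 * θ) + Real.cos u = α * (Real.sin (u + 2 * θ) - Real.sin u) := by
  rw [Real.cos_add, Real.sin_add, Real.cos_two_mul, Real.sin_two_mul]
  have hp : Real.sin θ ^ 2 + Real.cos θ ^ 2 = 1 := Real.sin_sq_add_cos_sq θ
  linear_combination (2 * (Real.cos θ * Real.cos u - Real.sin θ * Real.sin u)) * hcs -
    2 * α * Real.sin u * hp

noncomputable def ang (θ : ℝ) (m : ℕ) : ℝ :=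
  if Even m then 1 + m * θ else Real.pi - 1 - ((m:ℝ) - 1) * θ

lemma ang_even (θ : ℝ) (j : ℕ) : ang θ (2 * j) = 1 + 2 * j * θ := by
  rw [ang, if_pos ⟨j, two_mul j⟩]
  push_cast
  ring

lemma ang_odd (θ : ℝ) (j : ℕ) : ang θ (2 * j + 1) = Real.pi - 1 - 2 * j * θ := by
  have h : ¬ Even (2 * j + 1) := by simp [Nat.even_add_one, parity_simps]
  rw [ang, if_neg h]
  push_cast
  ring

lemma converse_dir {α θ : ℝ} (hcs : Real.cos θ = α * Real.sin θ) {n k : ℕ}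
    (hn : 2 ≤ n) (hk1 : 1 ≤ k) (hkn : k < n) (hgcd : Nat.gcd k n = 1)
    (hθk : θ = k * Real.pi / n) :
    ∃ A : ℕ → ℝ × ℝ, IsClosedAlt α (2 * n) A ∧
      ∀ j : ℕ, 0 < j → (∀ t, A (t + j) = A t) → 2 * n ≤ j := by
  have hπ := Real.pi_pos
  have hnR : (0:ℝ) < n := by exact_mod_cast (by omega : 0 < n)
  have hnne : (n:ℝ) ≠ 0 := ne_of_gt hnR
  have hθn : θ * n = k * Real.pi := by rw [hθk]; field_simp
  set A : ℕ → ℝ × ℝ := fun m => (Real.cos (ang θ m), Real.sin (ang θ m)) with hA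
  have hCirc : ∀ t, A t ∈ unitCircle := by
    intro t
    show Real.cos (ang θ t) ^ 2 + Real.sin (ang θ t) ^ 2 = 1
    exact Real.cos_sq_add_sin_sq _
  have hNe : ∀ t, A t ≠ A (t + 1) := by
    intro t heq
    have hc : Real.cos (ang θ t) = Real.cos (ang θ (t + 1)) := congrArg Prod.fst heq
    have hsn : Real.sin (ang θ t) = Real.sin (ang θ (t + 1)) := congrArg Prod.snd heq
    obtain ⟨m, hm⟩ := point_eq_angle hc hsn
    rcases Nat.even_or_odd t with ⟨j, hj⟩ | ⟨j, hj⟩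
    · have e1 : t = 2 * j := by omega
      rw [e1] at hm
      rw [ang_even, ang_odd] at hm
      -- 2 + 4jθ - π = m * 2π  ⇒ π * (2mn + n - 4jk) = 2n
      refine pi_mul_int_ne (show 0 < n by omega)
        (N := 2 * m * n + n - 4 * (j:ℤ) * k) ?_
      push_cast
      linear_combination (-(n:ℝ)) * hm + 4 * (j:ℝ) * hθn
    · have e1 : t = 2 * j + 1 := by omega
      rw [e1] at hm
      have e2 : 2 * j + 1 + 1 = 2 * (j + 1) := by omega
      rw [e2] at hm
      rw [ang_odd, ang_even] at hm
      push_cast at hm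
      refine pi_mul_int_ne (show 0 < n by omega)
        (N := (n:ℤ) - (4 * (j:ℤ) + 2) * k - 2 * m * n) ?_
      push_cast
      linear_combination (n:ℝ) * hm + (4 * (j:ℝ) + 2) * hθn
  have hAlt : AltParallel (1, 0) (α, 1) A := by
    left
    intro t
    constructor
    · have hss : Real.sin (ang θ (2 * t + 1)) = Real.sin (ang θ (2 * t)) := by
        rw [ang_odd, ang_even]
        have e : Real.pi - 1 - 2 * (t:ℝ) * θ = Real.pi - (1 + 2 * t * θ) := by ring
        rw [e, Real.sin_pi_sub]
      simp only [IsPar, hA, Prod.fst_sub, Prod.snd_sub]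
      simp [hss]
    · have e1 : ang θ (2 * t + 1) = Real.pi - (1 + 2 * t * θ) := by
        rw [ang_odd]; ring
      have e2 : ang θ (2 * t + 2) = (1 + 2 * t * θ) + 2 * θ := by
        have e : 2 * t + 2 = 2 * (t + 1) := by ring
        rw [e, ang_even]; push_cast; ring
      have key : Real.cos (ang θ (2 * t + 2)) - Real.cos (ang θ (2 * t + 1)) =
          (Real.sin (ang θ (2 * t + 2)) - Real.sin (ang θ (2 * t + 1))) * α := by
        rw [e1, e2, Real.cos_pi_sub, Real.sin_pi_sub]
        linear_combination slant_par (u := 1 + 2 * (t:ℝ) * θ) hcs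
      simp only [IsPar, hA, Prod.fst_sub, Prod.snd_sub]
      simpa using key
  have hPer : ∀ t, A (t + 2 * n) = A t := by
    intro t
    rcases Nat.even_or_odd t with ⟨u, hu⟩ | ⟨u, hu⟩
    · have e1 : t + 2 * n = 2 * (u + n) := by omega
      have e2 : t = 2 * u := by omega
      rw [e1, e2]
      have e : ang θ (2 * (u + n)) = ang θ (2 * u) + (k:ℤ) * (2 * Real.pi) := by
        rw [ang_even, ang_even]
        push_cast
        linear_combination 2 * hθn
      show (Real.cos _, Real.sin _) = (Real.cos _, Real.sin _)
      rw [e, Real.cos_add_int_mul_two_pi, Real.sin_add_int_mul_two_pi]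
    · have e1 : t + 2 * n = 2 * (u + n) + 1 := by omega
      have e2 : t = 2 * u + 1 := by omega
      rw [e1, e2]
      have e : ang θ (2 * (u + n) + 1) = ang θ (2 * u + 1) + ((-(k:ℤ) : ℤ) : ℝ) * (2 * Real.pi) := by
        rw [ang_odd, ang_odd]
        push_cast
        linear_combination (-2) * hθn
      show (Real.cos _, Real.sin _) = (Real.cos _, Real.sin _)
      rw [e, Real.cos_add_int_mul_two_pi, Real.sin_add_int_mul_two_pi]
  refine ⟨A, ⟨hCirc, hNe, hAlt, hPer⟩, ?_⟩
  intro j hj hperj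
  by_contra hlt
  push_neg at hlt
  rcases Nat.even_or_odd j with ⟨j', hj'⟩ | hodd
  · -- even case
    have hj'' : j = 2 * j' := by omega
    have hj'pos : 0 < j' := by omega
    have hj'n : j' < n := by omega
    have h0 : A (2 * j') = A 0 := by
      have := hperj 0
      rwa [Nat.zero_add, hj''] at this
    have hc : Real.cos (ang θ (2 * j')) = Real.cos (ang θ 0) := congrArg Prod.fst h0
    have hsn : Real.sin (ang θ (2 * j')) = Real.sin (ang θ 0) := congrArg Prod.snd h0
    obtain ⟨m, hm⟩ := point_eq_angle hc hsn
    have e0 : ang θ 0 = 1 := by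
      have : (0:ℕ) = 2 * 0 := rfl
      rw [this, ang_even]; push_cast; ring
    rw [ang_even, e0] at hm
    -- 2 j' θ = m * 2π  ⇒ j' k = m n
    have h1 : (j':ℝ) * (k:ℝ) * Real.pi = (m:ℝ) * (n:ℝ) * Real.pi := by
      linear_combination ((n:ℝ) / 2) * hm - (j':ℝ) * hθn
    have h2 : (j':ℝ) * (k:ℝ) = (m:ℝ) * (n:ℝ) :=
      mul_right_cancel₀ (ne_of_gt hπ) h1
    have h3 : (j' * k : ℤ) = m * n := by exact_mod_cast h2
    have hm0 : 0 ≤ m := by nlinarith [h3, hj'pos, hk1]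
    have h4 : j' * k = n * m.toNat := by
      have : ((j' * k : ℕ) : ℤ) = ((n * m.toNat : ℕ) : ℤ) := by
        push_cast
        rw [Int.toNat_of_nonneg hm0]
        linarith [h3]
      exact_mod_cast this
    have hdvd : n ∣ j' := by
      have hcop : Nat.Coprime n k := (Nat.coprime_comm.mp hgcd)
      exact hcop.dvd_of_dvd_mul_right ⟨m.toNat, h4⟩
    have := Nat.le_of_dvd hj'pos hdvd
    omega
  · -- odd case
    exact odd_no_closed hodd ⟨hCirc, hNe, hAlt, hperj⟩

/-- For `α ≥ 0` and the unit circle `Γ`, consider polygonal lines inscribed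
in `Γ` whose sides are alternately parallel to `(1, 0)` and `(α, 1)`; let `θ = arctan (1/α)`
(`θ = π/2` for `α = 0`). Then (i) no such polygonal line is closed with an odd number of
sides, and (ii) for `n ≥ 2` there is a closed such polygonal line with exactly `2 n` sides
iff `θ = k π / n` for some `1 ≤ k < n` with `gcd (k, n) = 1`. -/
theorem statement11 (α : ℝ) (hα : 0 ≤ α) (θ : ℝ)
    (hθ : θ = if α = 0 then Real.pi / 2 else Real.arctan (1 / α)) :
    (¬ ∃ (m : ℕ) (A : ℕ → ℝ × ℝ), Odd m ∧ IsClosedAlt α m A) ∧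
    (∀ n : ℕ, 2 ≤ n →
      ((∃ A : ℕ → ℝ × ℝ, IsClosedAlt α (2 * n) A ∧
          ∀ j : ℕ, 0 < j → (∀ k, A (k + j) = A k) → 2 * n ≤ j) ↔
        ∃ k : ℕ, 1 ≤ k ∧ k < n ∧ Nat.gcd k n = 1 ∧ θ = k * Real.pi / n)) := by
  obtain ⟨hs, hcs, hθ1, hθ2⟩ := theta_facts hα hθ
  constructor
  · rintro ⟨m, A, hodd, hA⟩
    exact odd_no_closed hodd hA
  · intro n hn
    constructor
    · rintro ⟨A, hA, hmin⟩
      exact forward_dir hs hcs hθ1 hθ2 hn hA hmin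
    · rintro ⟨k, hk1, hkn, hgcd, hθk⟩
      obtain ⟨A, hA, hmin⟩ := converse_dir hcs hn hk1 hkn hgcd hθk
      exact ⟨A, hA, hmin⟩
end

section
/- In ℝ², let g₁ = {y = 1} and g₂ = {y = −1}, let C₁ = (a, c) be a point with c ∉ {−1, 0, 1} (so that C₁ lies on neither line and its distances to g₁ and g₂ are not equal), and let d = (d₁, d₂) be a direction vector with d₂ ≠ 0. Let ℓ be the line through C₁ with direction d, and let V = ℓ ∩ g₁ and W = ℓ ∩ g₂. Consider polygonal lines with vertices alternately on g₁ and g₂, with consecutive vertices distinct, whose side lines alternately pass through C₁ and are parallel to d. Then: (i) the back-and-forth sequence V, W, V, W, … is such a polygonal line, all of whose sides lie on ℓ; (ii) no such polygonal line with a side line different from ℓ is closed; moreover, every bi-infinite such polygonal line (A_k)_{k∈ℤ} with a side line different from ℓ satisfies: in one of the two directions of traversal the vertices converge alternately to V and W, and in the opposite direction ‖A_k‖ → ∞. -/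
open Filter Topology

/-- The line through the point `P` with direction `d`. -/
def lineDir (P d : ℝ × ℝ) : Set (ℝ × ℝ) := {p | ∃ t : ℝ, p = P + t • d}

/-- The line `g₁ : y = 1`. -/
def lineG1 : Set (ℝ × ℝ) := {p : ℝ × ℝ | p.2 = 1}

/-- The line `g₂ : y = −1`. -/
def lineG2 : Set (ℝ × ℝ) := {p : ℝ × ℝ | p.2 = -1}

/-- The vertices of the bi-infinite polygonal line `A` lie alternately on `g₁` and `g₂`. -/
def VertAlt (A : ℤ → ℝ × ℝ) : Prop :=
  (∀ k : ℤ, A (2 * k) ∈ lineG1 ∧ A (2 * k + 1) ∈ lineG2) ∨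
  (∀ k : ℤ, A (2 * k) ∈ lineG2 ∧ A (2 * k + 1) ∈ lineG1)

/-- The side lines of the bi-infinite polygonal line `A` alternately contain `C₁` and are
parallel to the direction `d`. -/
def SideAlt (C₁ d : ℝ × ℝ) (A : ℤ → ℝ × ℝ) : Prop :=
  (∀ k : ℤ, C₁ ∈ lineThrough (A (2 * k)) (A (2 * k + 1)) ∧
      IsPar (A (2 * k + 2) - A (2 * k + 1)) d) ∨
  (∀ k : ℤ, IsPar (A (2 * k + 1) - A (2 * k)) d ∧
      C₁ ∈ lineThrough (A (2 * k + 1)) (A (2 * k + 2)))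

/-- The bi-infinite back-and-forth sequence `…, V, W, V, W, …`. -/
def backAndForthZ (V W : ℝ × ℝ) : ℤ → ℝ × ℝ := fun k => if k % 2 = 0 then V else W

def Concl (V W : ℝ × ℝ) (A : ℤ → ℝ × ℝ) : Prop :=
  (¬ ∃ n : ℕ, 0 < n ∧ ∀ k : ℤ, A (k + n) = A k) ∧
    (((∃ L₁ L₂ : ℝ × ℝ, ({L₁, L₂} : Set (ℝ × ℝ)) = {V, W} ∧
        Tendsto (fun m : ℕ => A (2 * (m : ℤ))) atTop (𝓝 L₁) ∧
        Tendsto (fun m : ℕ => A (2 * (m : ℤ) + 1)) atTop (𝓝 L₂)) ∧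
      Tendsto (fun m : ℕ => ‖A (-(m : ℤ))‖) atTop atTop) ∨
      ((∃ L₁ L₂ : ℝ × ℝ, ({L₁, L₂} : Set (ℝ × ℝ)) = {V, W} ∧
        Tendsto (fun m : ℕ => A (-(2 * (m : ℤ)))) atTop (𝓝 L₁) ∧
        Tendsto (fun m : ℕ => A (-(2 * (m : ℤ) + 1))) atTop (𝓝 L₂)) ∧
      Tendsto (fun m : ℕ => ‖A ((m : ℤ))‖) atTop atTop))
lemma lineThrough_comm (A B : ℝ × ℝ) : lineThrough A B = lineThrough B A := by
  have key : ∀ P Q : ℝ × ℝ, lineThrough P Q ⊆ lineThrough Q P := by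
    rintro P Q p ⟨t, rfl⟩
    exact ⟨1 - t, by module⟩
  exact le_antisymm (key A B) (key B A)

lemma IsPar_neg {u v : ℝ × ℝ} (h : IsPar u v) : IsPar (-u) v := by
  unfold IsPar at *
  simp only [Prod.fst_neg, Prod.snd_neg]
  linarith

lemma lineThrough_eq_lineDir {C d P Q : ℝ × ℝ} (hd : d ≠ 0)
    (hP : P ∈ lineDir C d) (hQ : Q ∈ lineDir C d) (hPQ : P ≠ Q) :
    lineThrough P Q = lineDir C d := by
  obtain ⟨s, rfl⟩ := hP
  obtain ⟨t, rfl⟩ := hQ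
  have hst : t - s ≠ 0 := by
    intro h
    apply hPQ
    have : t = s := by linarith [sub_eq_zero.mp h]
    rw [this]
  ext p
  constructor
  · rintro ⟨u, rfl⟩
    exact ⟨s + u * (t - s), by module⟩
  · rintro ⟨r, rfl⟩
    refine ⟨(r - s) / (t - s), ?_⟩
    have : ((r - s) / (t - s)) * (t - s) = r - s := div_mul_cancel₀ _ hst
    match_scalars <;> field_simp <;> ring


lemma abs_lower (p z : ℝ) : |z| - |p| ≤ |p + z| := by
  have h := abs_add_le (p + z) (-p)
  have h2 : p + z + -p = z := by ring
  rw [h2, abs_neg] at h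
  linarith

lemma tendsto_norm_aux (F : ℕ → ℝ × ℝ) (r c0 M : ℝ) (hr : 1 < r) (hc0 : 0 < c0)
    (hbd : ∀ m : ℕ, r ^ (m / 2) * c0 - M ≤ ‖F m‖) :
    Filter.Tendsto (fun m => ‖F m‖) Filter.atTop Filter.atTop := by
  apply Filter.tendsto_atTop_mono hbd
  have h2 : Filter.Tendsto (fun m : ℕ => m / 2) Filter.atTop Filter.atTop :=
    Filter.tendsto_atTop_atTop.mpr (fun b => ⟨2 * b, fun m hm => by omega⟩)
  have h1 : Filter.Tendsto (fun i : ℕ => r ^ i * c0 - M) Filter.atTop Filter.atTop := by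
    have h0 := (tendsto_pow_atTop_atTop_of_one_lt hr).atTop_mul_const hc0
    exact (Filter.tendsto_atTop_add_const_right Filter.atTop (-M) h0).congr (fun x => by ring)
  exact h1.comp h2

lemma core (a c : ℝ) (hc1 : c ≠ -1) (hc0 : c ≠ 0) (hc1' : c ≠ 1)
    (d : ℝ × ℝ) (hd : d.2 ≠ 0) (V W : ℝ × ℝ)
    (hV : V ∈ lineDir (a, c) d ∧ V ∈ lineG1)
    (hW : W ∈ lineDir (a, c) d ∧ W ∈ lineG2)
    (A : ℤ → ℝ × ℝ)
    (h1 : ∀ k : ℤ, (A (2 * k)).2 = 1) (h2 : ∀ k : ℤ, (A (2 * k + 1)).2 = -1)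
    (hC : ∀ k : ℤ, (a, c) ∈ lineThrough (A (2 * k)) (A (2 * k + 1)))
    (hP : ∀ k : ℤ, IsPar (A (2 * k + 2) - A (2 * k + 1)) d)
    (hne : ∃ k : ℤ, A k ∉ lineDir (a, c) d) :
    Concl V W A := by
  have hcm : c - 1 ≠ 0 := sub_ne_zero.mpr hc1'
  have hcp : 1 + c ≠ 0 := by intro h; apply hc1; linarith
  set x : ℤ → ℝ := fun k => (A (2 * k)).1 with hx
  set y : ℤ → ℝ := fun k => (A (2 * k + 1)).1 with hy
  obtain ⟨L, hL⟩ : ∃ L : ℝ, L = (1 + c) / (c - 1) := ⟨_, rfl⟩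
  obtain ⟨D, hD⟩ : ∃ D : ℝ, D = d.1 / d.2 := ⟨_, rfl⟩
  set v : ℝ := V.1 with hv
  set w : ℝ := W.1 with hw
  have hV2 : V.2 = 1 := hV.2
  have hW2 : W.2 = -1 := hW.2
  -- V and W coordinates
  have E3 : v = a + (1 - c) * D := by
    obtain ⟨t, ht⟩ := hV.1
    have h1' : V.1 = a + t * d.1 := by rw [ht]; simp [Prod.fst_add, Prod.smul_fst, smul_eq_mul]
    have h2' : V.2 = c + t * d.2 := by rw [ht]; simp [Prod.snd_add, Prod.smul_snd, smul_eq_mul]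
    rw [hV2] at h2'
    have htv : t = (1 - c) / d.2 := by field_simp; linarith
    rw [hv, h1', htv, hD]; field_simp
  have E4 : w = a - (1 + c) * D := by
    obtain ⟨t, ht⟩ := hW.1
    have h1' : W.1 = a + t * d.1 := by rw [ht]; simp [Prod.fst_add, Prod.smul_fst, smul_eq_mul]
    have h2' : W.2 = c + t * d.2 := by rw [ht]; simp [Prod.snd_add, Prod.smul_snd, smul_eq_mul]
    rw [hW2] at h2'
    have htv : t = (-1 - c) / d.2 := by field_simp; linarith
    rw [hw, h1', htv, hD]; field_simp; ring
  -- recurrence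
  have key : ∀ k : ℤ, (x (k + 1) - v = L * (x k - v)) ∧ (y k - w = L * (x k - v)) := by
    intro k
    obtain ⟨t, ht⟩ := hC k
    have hCa : a = x k + t * (y k - x k) := by
      have := congrArg Prod.fst ht
      simpa [Prod.fst_add, Prod.smul_fst, smul_eq_mul, Prod.fst_sub] using this
    have hCc : c = 1 + t * (-1 - 1) := by
      have := congrArg Prod.snd ht
      simpa [Prod.snd_add, Prod.smul_snd, smul_eq_mul, Prod.snd_sub, h1 k, h2 k] using this
    have htv : t = (1 - c) / 2 := by linarith
    rw [htv] at hCa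
    have E1 : 2 * a = (1 + c) * x k + (1 - c) * y k := by
      field_simp at hCa; linarith
    have hPk := hP k
    have hA2 : (A (2 * k + 2)) = A (2 * (k + 1)) := by ring_nf
    have hfst : (A (2 * k + 2)).1 = x (k + 1) := by rw [hA2]
    have hsnd : (A (2 * k + 2)).2 = 1 := by rw [hA2]; exact h1 (k + 1)
    unfold IsPar at hPk
    rw [Prod.fst_sub, Prod.snd_sub, hfst, hsnd, h2 k] at hPk
    -- hPk : (x (k+1) - y k) * d.2 = (1 - -1) * d.1
    have E2 : x (k + 1) = y k + 2 * D := by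
      rw [hD]; field_simp; linarith
    constructor
    · rw [E2, E3, hL]
      field_simp
      linear_combination E1
    · rw [E3, E4, hL]
      field_simp
      linear_combination E1
  -- basic facts about L
  have hL0 : L ≠ 0 := by rw [hL]; exact div_ne_zero hcp hcm
  have hLne1 : |L| ≠ 1 := by
    intro h
    rcases (abs_eq zero_le_one).mp h with h' | h'
    · rw [hL] at h'; field_simp at h'; linarith
    · rw [hL] at h'; field_simp at h'
      apply hc0; linarith
  set e : ℤ → ℝ := fun k => x k - v with he
  have hrec : ∀ k : ℤ, e (k + 1) = L * e k := fun k => (key k).1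
  have hyw : ∀ k : ℤ, y k = w + L * e k := fun k => by
    have := (key k).2; simp only [he]; linarith
  have hpow : ∀ k : ℤ, e k = L ^ k * e 0 := by
    intro k
    induction k using Int.induction_on with
    | zero => simp
    | succ i ih =>
        rw [hrec i, ih, zpow_add_one₀ hL0]; ring
    | pred i ih =>
        have h' := hrec (-(i:ℤ) - 1)
        rw [sub_add_cancel] at h'
        have h'' : e (-(i:ℤ) - 1) = L⁻¹ * e (-(i:ℤ)) := by
          field_simp; linarith [h']
        rw [h'', ih, zpow_sub_one₀ hL0]; ring
  -- e 0 ≠ 0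
  have hVeq : V = (v, 1) := Prod.ext rfl hV2
  have hWeq : W = (w, -1) := Prod.ext rfl hW2
  have hAe : ∀ k : ℤ, A (2 * k) = (x k, 1) := fun k => Prod.ext rfl (h1 k)
  have hAo : ∀ k : ℤ, A (2 * k + 1) = (y k, -1) := fun k => Prod.ext rfl (h2 k)
  have he0 : e 0 ≠ 0 := by
    intro h0
    obtain ⟨k, hk⟩ := hne
    apply hk
    have hz : ∀ j : ℤ, e j = 0 := fun j => by rw [hpow j, h0, mul_zero]
    have hxv : ∀ j : ℤ, x j = v := fun j => by have := hz j; simp only [he] at this; linarith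
    have hyw' : ∀ j : ℤ, y j = w := fun j => by rw [hyw j, hz j]; ring
    rcases Int.even_or_odd k with ⟨j, hj⟩ | ⟨j, hj⟩
    · have : A k = V := by rw [hj, show j + j = 2 * j by ring, hAe j, hxv j, hVeq]
      rw [this]; exact hV.1
    · have : A k = W := by rw [hj, show 2 * j + 1 = 2 * j + 1 by ring, hAo j, hyw' j, hWeq]
      rw [this]; exact hW.1
  have habs : ∀ i : ℕ, |L ^ (-(i:ℤ))| = (|L|⁻¹) ^ i := by
    intro i
    rw [zpow_neg, abs_inv, zpow_natCast, abs_pow, inv_pow]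
  constructor
  · -- nonperiodic
    rintro ⟨n, hn, hper⟩
    rcases Nat.even_or_odd n with ⟨m, hm⟩ | ⟨m, hm⟩
    · have hm0 : m ≠ 0 := by omega
      have : A (0 + (n : ℤ)) = A 0 := hper 0
      have hxm : x m = x 0 := by
        have h' : A (2 * (m : ℤ)) = A (2 * 0) := by
          rw [show (2 : ℤ) * 0 = 0 by ring, ← this]
          congr 1
          omega
        show (A (2 * (m : ℤ))).1 = (A (2 * 0)).1
        rw [h']
      have hem : e (m : ℤ) = e 0 := by simp only [he]; rw [hxm]
      rw [hpow] at hem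
      have hone : L ^ ((m : ℤ)) = 1 :=
        mul_right_cancel₀ he0 (hem.trans (one_mul (e 0)).symm)
      have habs1 : |L| ^ m = 1 := by
        rw [zpow_natCast] at hone
        have := congrArg abs hone
        rwa [abs_pow, abs_one] at this
      rcases lt_trichotomy |L| 1 with h' | h' | h'
      · have := pow_lt_one₀ (abs_nonneg L) h' hm0
        rw [habs1] at this; exact lt_irrefl 1 this
      · exact hLne1 h'
      · have := one_lt_pow₀ h' hm0
        rw [habs1] at this; exact lt_irrefl 1 this
    · -- odd period: parity contradiction
      have h' : A (0 + (n : ℤ)) = A 0 := hper 0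
      have hpar : (A ((n : ℤ))).2 = -1 := by
        have : (n : ℤ) = 2 * (m : ℤ) + 1 := by omega
        rw [this]; exact h2 m
      have hpar2 : (A 0).2 = 1 := by
        have := h1 0; rwa [mul_zero] at this
      rw [zero_add] at h'
      rw [h', hpar2] at hpar
      norm_num at hpar
  -- dichotomy
  have hLinv : ∀ m : ℕ, L ^ (-(m:ℤ)) = (L⁻¹) ^ m := fun m => by
    rw [zpow_neg, ← inv_zpow, zpow_natCast]
  have hyL : ∀ k : ℤ, y k = w + L ^ (k + 1) * e 0 := fun k => by
    rw [hyw k, hpow k, zpow_add_one₀ hL0]; ring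
  have hxL : ∀ k : ℤ, x k = v + L ^ k * e 0 := fun k => by
    have h' := hpow k
    simp only [he] at h' ⊢
    linarith
  have hc0' : 0 < |e 0| := abs_pos.mpr he0
  have hM : ∀ u : ℝ, u = v ∨ u = w → |u| ≤ max |v| |w| := by
    rintro u (rfl | rfl)
    exacts [le_max_left _ _, le_max_right _ _]
  rcases lt_or_gt_of_ne hLne1 with hlt | hgt
  · -- |L| < 1 : forward convergence, backward divergence
    left
    constructor
    · refine ⟨V, W, rfl, ?_, ?_⟩
      · have hfun : (fun m : ℕ => A (2 * (m:ℤ))) = fun m : ℕ => (v + L ^ m * e 0, 1) := by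
          funext m
          rw [hAe (m:ℤ), hxL (m:ℤ), zpow_natCast]
        rw [hfun, hVeq]
        have h0 : Filter.Tendsto (fun m : ℕ => v + L ^ m * e 0) Filter.atTop (nhds v) := by
          have := (tendsto_pow_atTop_nhds_zero_of_abs_lt_one hlt).mul_const (e 0)
          simpa using tendsto_const_nhds.add this
        exact h0.prodMk_nhds tendsto_const_nhds
      · have hfun : (fun m : ℕ => A (2 * (m:ℤ) + 1)) = fun m : ℕ => (w + L ^ (m+1) * e 0, -1) := by
          funext m
          rw [hAo (m:ℤ), hyL (m:ℤ),
            show (m:ℤ) + 1 = ((m+1 : ℕ) : ℤ) by push_cast; ring, zpow_natCast]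
        rw [hfun, hWeq]
        have h0 : Filter.Tendsto (fun m : ℕ => w + L ^ (m+1) * e 0) Filter.atTop (nhds w) := by
          have h1 : Filter.Tendsto (fun m : ℕ => L ^ m * e 0) Filter.atTop (nhds 0) := by
            simpa using (tendsto_pow_atTop_nhds_zero_of_abs_lt_one hlt).mul_const (e 0)
          have h2 : Filter.Tendsto (fun m : ℕ => L ^ (m+1) * e 0) Filter.atTop (nhds 0) :=
            ((Filter.tendsto_add_atTop_iff_nat 1).mpr h1)
          simpa using tendsto_const_nhds.add h2
        exact h0.prodMk_nhds tendsto_const_nhds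
    · -- backward divergence
      have hr : 1 < |L|⁻¹ := by
        rw [lt_inv_comm₀] <;> simp [abs_pos.mpr hL0, hlt]
      apply tendsto_norm_aux _ (|L|⁻¹) (|e 0|) (max |v| |w|) hr hc0'
      intro m
      rcases Nat.even_or_odd m with ⟨i, hi⟩ | ⟨i, hi⟩
      · have hidx : -(m:ℤ) = 2 * (-(i:ℤ)) := by omega
        have hAv : A (-(m:ℤ)) = (x (-(i:ℤ)), 1) := by rw [hidx]; exact hAe _
        have hm2 : m / 2 = i := by omega
        have hxi : x (-(i:ℤ)) = v + L ^ (-(i:ℤ)) * e 0 := hxL _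
        calc (|L|⁻¹) ^ (m/2) * |e 0| - max |v| |w|
            ≤ |L ^ (-(i:ℤ)) * e 0| - |v| := by
              rw [hm2, abs_mul, habs i]
              have := hM v (Or.inl rfl)
              linarith
          _ ≤ |x (-(i:ℤ))| := by rw [hxi]; exact abs_lower v _
          _ ≤ ‖A (-(m:ℤ))‖ := by
              rw [hAv]
              exact norm_fst_le ((x (-(i:ℤ)), 1) : ℝ × ℝ)
      · have hidx : -(m:ℤ) = 2 * (-(i:ℤ) - 1) + 1 := by omega
        have hAv : A (-(m:ℤ)) = (y (-(i:ℤ) - 1), -1) := by rw [hidx]; exact hAo _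
        have hm2 : m / 2 = i := by omega
        have hyi : y (-(i:ℤ) - 1) = w + L ^ (-(i:ℤ)) * e 0 := by
          rw [hyL (-(i:ℤ) - 1), show -(i:ℤ) - 1 + 1 = -(i:ℤ) by ring]
        calc (|L|⁻¹) ^ (m/2) * |e 0| - max |v| |w|
            ≤ |L ^ (-(i:ℤ)) * e 0| - |w| := by
              rw [hm2, abs_mul, habs i]
              have := hM w (Or.inr rfl)
              linarith
          _ ≤ |y (-(i:ℤ) - 1)| := by rw [hyi]; exact abs_lower w _
          _ ≤ ‖A (-(m:ℤ))‖ := by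
              rw [hAv]
              exact norm_fst_le ((y (-(i:ℤ) - 1), -1) : ℝ × ℝ)
  · -- |L| > 1 : backward convergence, forward divergence
    right
    have hinv : |L⁻¹| < 1 := by
      rw [abs_inv]
      rw [inv_lt_one_iff₀]
      right; exact hgt
    constructor
    · refine ⟨V, W, rfl, ?_, ?_⟩
      · have hfun : (fun m : ℕ => A (-(2 * (m:ℤ)))) = fun m : ℕ => (v + (L⁻¹) ^ m * e 0, 1) := by
          funext m
          rw [show -(2 * (m:ℤ)) = 2 * (-(m:ℤ)) by ring, hAe _, hxL _, hLinv m]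
        rw [hfun, hVeq]
        have h0 : Filter.Tendsto (fun m : ℕ => v + (L⁻¹) ^ m * e 0) Filter.atTop (nhds v) := by
          have := (tendsto_pow_atTop_nhds_zero_of_abs_lt_one hinv).mul_const (e 0)
          simpa using tendsto_const_nhds.add this
        exact h0.prodMk_nhds tendsto_const_nhds
      · have hfun : (fun m : ℕ => A (-(2 * (m:ℤ) + 1))) = fun m : ℕ => (w + (L⁻¹) ^ m * e 0, -1) := by
          funext m
          rw [show -(2 * (m:ℤ) + 1) = 2 * (-(m:ℤ) - 1) + 1 by ring, hAo _,
            hyL (-(m:ℤ) - 1), show -(m:ℤ) - 1 + 1 = -(m:ℤ) by ring, hLinv m]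
        rw [hfun, hWeq]
        have h0 : Filter.Tendsto (fun m : ℕ => w + (L⁻¹) ^ m * e 0) Filter.atTop (nhds w) := by
          have := (tendsto_pow_atTop_nhds_zero_of_abs_lt_one hinv).mul_const (e 0)
          simpa using tendsto_const_nhds.add this
        exact h0.prodMk_nhds tendsto_const_nhds
    · -- forward divergence
      apply tendsto_norm_aux _ (|L|) (|e 0|) (max |v| |w|) hgt hc0'
      intro m
      have habsn : ∀ j : ℕ, |L ^ ((j:ℤ))| = |L| ^ j := fun j => by
        rw [zpow_natCast, abs_pow]
      rcases Nat.even_or_odd m with ⟨i, hi⟩ | ⟨i, hi⟩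
      · have hidx : (m:ℤ) = 2 * (i:ℤ) := by omega
        have hAv : A ((m:ℤ)) = (x ((i:ℤ)), 1) := by rw [hidx]; exact hAe _
        have hm2 : m / 2 = i := by omega
        calc (|L|) ^ (m/2) * |e 0| - max |v| |w|
            ≤ |L ^ ((i:ℤ)) * e 0| - |v| := by
              rw [hm2, abs_mul, habsn i]
              have := hM v (Or.inl rfl)
              linarith
          _ ≤ |x ((i:ℤ))| := by rw [hxL (i:ℤ)]; exact abs_lower v _
          _ ≤ ‖A ((m:ℤ))‖ := by
              rw [hAv]
              exact norm_fst_le ((x ((i:ℤ)), 1) : ℝ × ℝ)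
      · have hidx : (m:ℤ) = 2 * (i:ℤ) + 1 := by omega
        have hAv : A ((m:ℤ)) = (y ((i:ℤ)), -1) := by rw [hidx]; exact hAo _
        have hm2 : m / 2 = i := by omega
        have hstep : |L| ^ i * |e 0| ≤ |L| ^ (i+1) * |e 0| := by
          apply mul_le_mul_of_nonneg_right _ (abs_nonneg _)
          exact pow_le_pow_right₀ (le_of_lt hgt) (Nat.le_succ i)
        calc (|L|) ^ (m/2) * |e 0| - max |v| |w|
            ≤ |L ^ ((i:ℤ) + 1) * e 0| - |w| := by
              rw [hm2, abs_mul]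
              rw [show (i:ℤ) + 1 = ((i+1 : ℕ):ℤ) by push_cast; ring, habsn (i+1)]
              have := hM w (Or.inr rfl)
              linarith
          _ ≤ |y ((i:ℤ))| := by rw [hyL (i:ℤ)]; exact abs_lower w _
          _ ≤ ‖A ((m:ℤ))‖ := by
              rw [hAv]
              exact norm_fst_le ((y ((i:ℤ)), -1) : ℝ × ℝ)

lemma concl_rev (V W : ℝ × ℝ) (A : ℤ → ℝ × ℝ) (h : Concl V W (fun k => A (-k))) :
    Concl V W A := by
  obtain ⟨hnp, hdi⟩ := h
  constructor
  · rintro ⟨n, hn, hp⟩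
    refine hnp ⟨n, hn, fun k => ?_⟩
    show A (-(k + (n:ℤ))) = A (-k)
    have := hp (-(k + (n:ℤ)))
    rw [show -(k + (n:ℤ)) + n = -k by ring] at this
    exact this.symm
  · rcases hdi with ⟨⟨L₁, L₂, hpair, hT1, hT2⟩, hDiv⟩ | ⟨⟨L₁, L₂, hpair, hT1, hT2⟩, hDiv⟩
    · right
      refine ⟨⟨L₁, L₂, hpair, hT1, hT2⟩, ?_⟩
      exact hDiv.congr fun m => by show ‖A (- -(m:ℤ))‖ = ‖A ((m:ℤ))‖; rw [neg_neg]
    · left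
      refine ⟨⟨L₁, L₂, hpair,
        hT1.congr fun m => by show A (- -(2*(m:ℤ))) = A (2*(m:ℤ)); rw [neg_neg],
        hT2.congr fun m => by show A (- -(2*(m:ℤ)+1)) = A (2*(m:ℤ)+1); rw [neg_neg]⟩, hDiv⟩

lemma concl_shift (V W : ℝ × ℝ) (A : ℤ → ℝ × ℝ) (h : Concl V W (fun k => A (k + 1))) :
    Concl V W A := by
  obtain ⟨hnp, hdi⟩ := h
  constructor
  · rintro ⟨n, hn, hp⟩
    refine hnp ⟨n, hn, fun k => ?_⟩
    show A (k + (n:ℤ) + 1) = A (k + 1)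
    have := hp (k + 1)
    rw [show k + 1 + (n:ℤ) = k + n + 1 by ring] at this
    exact this
  · rcases hdi with ⟨⟨L₁, L₂, hpair, hT1, hT2⟩, hDiv⟩ | ⟨⟨L₁, L₂, hpair, hT1, hT2⟩, hDiv⟩
    · left
      refine ⟨⟨L₂, L₁, by rw [Set.pair_comm]; exact hpair, ?_, ?_⟩, ?_⟩
      · refine (tendsto_add_atTop_iff_nat 1).mp (hT2.congr fun m => ?_)
        show A (2*(m:ℤ)+1+1) = A (2*((m+1:ℕ):ℤ))
        rw [show (2*(m:ℤ)+1+1) = (2*((m+1:ℕ):ℤ)) by push_cast; ring]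
      · exact hT1.congr fun m => by show A (2*(m:ℤ)+1) = A (2*(m:ℤ)+1); rfl
      · refine ((hDiv.comp (tendsto_add_atTop_nat 1)).congr fun m => ?_)
        show ‖A (-((m+1:ℕ):ℤ) + 1)‖ = ‖A (-(m:ℤ))‖
        rw [show -((m+1:ℕ):ℤ) + 1 = -(m:ℤ) by push_cast; ring]
    · right
      refine ⟨⟨L₂, L₁, by rw [Set.pair_comm]; exact hpair, ?_, ?_⟩, ?_⟩
      · refine hT2.congr fun m => ?_
        show A (-(2*(m:ℤ)+1) + 1) = A (-(2*(m:ℤ)))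
        rw [show (-(2*(m:ℤ)+1) + 1) = (-(2*(m:ℤ))) by ring]
      · refine ((hT1.comp (tendsto_add_atTop_nat 1)).congr fun m => ?_)
        show A (-(2*((m+1:ℕ):ℤ)) + 1) = A (-(2*(m:ℤ)+1))
        rw [show -(2*((m+1:ℕ):ℤ)) + 1 = -(2*(m:ℤ)+1) by push_cast; ring]
      · refine (tendsto_add_atTop_iff_nat 1).mp (hDiv.congr fun m => ?_)
        show ‖A ((m:ℤ) + 1)‖ = ‖A (((m+1:ℕ):ℤ))‖
        rw [show ((m:ℤ) + 1) = (((m+1:ℕ):ℤ)) by push_cast; ring]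

/-- Let `g₁ : y = 1`, `g₂ : y = −1`, let `C₁ = (a, c)` with
`c ∉ {−1, 0, 1}`, let `d` be a direction with `d₂ ≠ 0`, let `ℓ` be the line through `C₁` with
direction `d`, and let `V = ℓ ∩ g₁`, `W = ℓ ∩ g₂`. For polygonal lines with vertices
alternately on `g₁`, `g₂` whose side lines alternately pass through `C₁` and are parallel to
`d`: (i) the back-and-forth sequence `V, W, V, W, …` is such a polygonal line, with all sides
on `ℓ`; (ii) no such polygonal line with a side line different from `ℓ` is closed, and every
bi-infinite one with a side line different from `ℓ` converges alternately to `V` and `W` in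
one direction of traversal, while in the opposite direction its vertices diverge to
infinity in norm. -/
theorem statement14 (a c : ℝ) (hc1 : c ≠ -1) (hc0 : c ≠ 0) (hc1' : c ≠ 1)
    (d : ℝ × ℝ) (hd : d.2 ≠ 0)
    (V W : ℝ × ℝ)
    (hV : V ∈ lineDir (a, c) d ∧ V ∈ lineG1)
    (hW : W ∈ lineDir (a, c) d ∧ W ∈ lineG2) :
    (V ≠ W ∧
      (∀ k : ℤ, backAndForthZ V W k ≠ backAndForthZ V W (k + 1)) ∧
      VertAlt (backAndForthZ V W) ∧
      SideAlt (a, c) d (backAndForthZ V W) ∧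
      (∀ k : ℤ, lineThrough (backAndForthZ V W k) (backAndForthZ V W (k + 1)) =
        lineDir (a, c) d)) ∧
    (∀ A : ℤ → ℝ × ℝ,
      (∀ k : ℤ, A k ≠ A (k + 1)) →
      VertAlt A →
      SideAlt (a, c) d A →
      (∃ k : ℤ, lineThrough (A k) (A (k + 1)) ≠ lineDir (a, c) d) →
      ((¬ ∃ n : ℕ, 0 < n ∧ ∀ k : ℤ, A (k + n) = A k) ∧
        (((∃ L₁ L₂ : ℝ × ℝ, ({L₁, L₂} : Set (ℝ × ℝ)) = {V, W} ∧
            Tendsto (fun m : ℕ => A (2 * (m : ℤ))) atTop (𝓝 L₁) ∧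
            Tendsto (fun m : ℕ => A (2 * (m : ℤ) + 1)) atTop (𝓝 L₂)) ∧
          Tendsto (fun m : ℕ => ‖A (-(m : ℤ))‖) atTop atTop) ∨
          ((∃ L₁ L₂ : ℝ × ℝ, ({L₁, L₂} : Set (ℝ × ℝ)) = {V, W} ∧
            Tendsto (fun m : ℕ => A (-(2 * (m : ℤ)))) atTop (𝓝 L₁) ∧
            Tendsto (fun m : ℕ => A (-(2 * (m : ℤ) + 1))) atTop (𝓝 L₂)) ∧
          Tendsto (fun m : ℕ => ‖A (m : ℤ)‖) atTop atTop)))) := by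
  have hdne : d ≠ 0 := fun h => hd (by rw [h]; rfl)
  have hV2 : V.2 = 1 := hV.2
  have hW2 : W.2 = -1 := hW.2
  have hVW : V ≠ W := fun h => by rw [h, hW2] at hV2; norm_num at hV2
  have hCV : (a, c) ∈ lineDir (a, c) d := ⟨0, by simp⟩
  have hlineVW : lineThrough V W = lineDir (a, c) d :=
    lineThrough_eq_lineDir hdne hV.1 hW.1 hVW
  have hlineWV : lineThrough W V = lineDir (a, c) d :=
    lineThrough_eq_lineDir hdne hW.1 hV.1 hVW.symm
  obtain ⟨t₁, ht₁⟩ := hV.1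
  obtain ⟨t₂, ht₂⟩ := hW.1
  have hVmW : IsPar (V - W) d := by
    have hsub : V - W = (t₁ - t₂) • d := by rw [ht₁, ht₂]; module
    rw [hsub]
    show ((t₁ - t₂) • d).1 * d.2 = ((t₁ - t₂) • d).2 * d.1
    simp only [Prod.smul_fst, Prod.smul_snd, smul_eq_mul]
    ring
  have hWmV : IsPar (W - V) d := by
    have hsub : W - V = -(V - W) := by ring
    rw [hsub]; exact IsPar_neg hVmW
  have hbfe : ∀ k : ℤ, backAndForthZ V W (2 * k) = V := fun k => by
    unfold backAndForthZ
    rw [if_pos (Int.mul_emod_right 2 k)]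
  have hbfo : ∀ k : ℤ, backAndForthZ V W (2 * k + 1) = W := fun k => by
    unfold backAndForthZ
    rw [if_neg (by omega)]
  constructor
  · refine ⟨hVW, ?_, ?_, ?_, ?_⟩
    · intro k
      rcases Int.even_or_odd k with ⟨j, hj⟩ | ⟨j, hj⟩
      · rw [show k = 2 * j by omega, show 2 * j + 1 = 2 * j + 1 by ring, hbfe, hbfo]
        exact hVW
      · rw [show k = 2 * j + 1 by omega, show 2 * j + 1 + 1 = 2 * (j + 1) by ring, hbfo, hbfe]
        exact hVW.symm
    · left
      intro k
      rw [hbfe, hbfo]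
      exact ⟨hV.2, hW.2⟩
    · left
      intro k
      constructor
      · rw [hbfe, hbfo, hlineVW]; exact hCV
      · rw [show 2 * k + 2 = 2 * (k + 1) by ring, hbfe, hbfo]; exact hVmW
    · intro k
      rcases Int.even_or_odd k with ⟨j, hj⟩ | ⟨j, hj⟩
      · rw [show k = 2 * j by omega, hbfe, hbfo, hlineVW]
      · rw [show k = 2 * j + 1 by omega, show 2 * j + 1 + 1 = 2 * (j + 1) by ring,
          hbfo, hbfe, hlineWV]
  · intro A hdist hvert hside hex
    have hV' : V ∈ lineDir (a, c) d ∧ V ∈ lineG1 := ⟨⟨t₁, ht₁⟩, hV.2⟩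
    have hW' : W ∈ lineDir (a, c) d ∧ W ∈ lineG2 := ⟨⟨t₂, ht₂⟩, hW.2⟩
    have hoff : ∃ k : ℤ, A k ∉ lineDir (a, c) d := by
      by_contra hcon
      push_neg at hcon
      obtain ⟨k, hk⟩ := hex
      exact hk (lineThrough_eq_lineDir hdne (hcon k) (hcon (k + 1)) (hdist k))
    show Concl V W A
    rcases hvert with hv | hv <;> rcases hside with hs | hs
    · -- (V1, S1) : direct
      exact core a c hc1 hc0 hc1' d hd V W hV' hW' A
        (fun k => (hv k).1) (fun k => (hv k).2) (fun k => (hs k).1) (fun k => (hs k).2) hoff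
    · -- (V1, S2) : reverse
      apply concl_rev
      refine core a c hc1 hc0 hc1' d hd V W hV' hW' (fun k => A (-k)) ?_ ?_ ?_ ?_ ?_
      · intro k
        show (A (-(2 * k))).2 = 1
        rw [show -(2 * k) = 2 * (-k) by ring]
        exact (hv (-k)).1
      · intro k
        show (A (-(2 * k + 1))).2 = -1
        rw [show -(2 * k + 1) = 2 * (-k - 1) + 1 by ring]
        exact (hv (-k - 1)).2
      · intro k
        show (a, c) ∈ lineThrough (A (-(2 * k))) (A (-(2 * k + 1)))
        rw [show -(2 * k) = 2 * (-k - 1) + 2 by ring,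
          show -(2 * k + 1) = 2 * (-k - 1) + 1 by ring, lineThrough_comm]
        exact (hs (-k - 1)).2
      · intro k
        show IsPar (A (-(2 * k + 2)) - A (-(2 * k + 1))) d
        have h' := IsPar_neg (hs (-k - 1)).1
        rw [neg_sub] at h'
        rw [show -(2 * k + 2) = 2 * (-k - 1) by ring,
          show -(2 * k + 1) = 2 * (-k - 1) + 1 by ring]
        exact h'
      · obtain ⟨k, hk⟩ := hoff
        exact ⟨-k, by show A (- -k) ∉ _; rw [neg_neg]; exact hk⟩
    · -- (V2, S1) : shift then reverse
      apply concl_shift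
      apply concl_rev
      refine core a c hc1 hc0 hc1' d hd V W hV' hW' (fun k => A (-k + 1)) ?_ ?_ ?_ ?_ ?_
      · intro k
        show (A (-(2 * k) + 1)).2 = 1
        rw [show -(2 * k) + 1 = 2 * (-k) + 1 by ring]
        exact (hv (-k)).2
      · intro k
        show (A (-(2 * k + 1) + 1)).2 = -1
        rw [show -(2 * k + 1) + 1 = 2 * (-k) by ring]
        exact (hv (-k)).1
      · intro k
        show (a, c) ∈ lineThrough (A (-(2 * k) + 1)) (A (-(2 * k + 1) + 1))
        rw [show -(2 * k) + 1 = 2 * (-k) + 1 by ring,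
          show -(2 * k + 1) + 1 = 2 * (-k) by ring, lineThrough_comm]
        exact (hs (-k)).1
      · intro k
        show IsPar (A (-(2 * k + 2) + 1) - A (-(2 * k + 1) + 1)) d
        have h' := IsPar_neg (hs (-k - 1)).2
        rw [neg_sub] at h'
        rw [show -(2 * k + 2) + 1 = 2 * (-k - 1) + 1 by ring,
          show -(2 * k + 1) + 1 = 2 * (-k - 1) + 2 by ring]
        exact h'
      · obtain ⟨k, hk⟩ := hoff
        exact ⟨1 - k, by show A (-(1 - k) + 1) ∉ _; rw [show -(1 - k) + 1 = k by ring]; exact hk⟩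
    · -- (V2, S2) : shift
      apply concl_shift
      refine core a c hc1 hc0 hc1' d hd V W hV' hW' (fun k => A (k + 1)) ?_ ?_ ?_ ?_ ?_
      · intro k
        show (A (2 * k + 1)).2 = 1
        exact (hv k).2
      · intro k
        show (A (2 * k + 1 + 1)).2 = -1
        rw [show 2 * k + 1 + 1 = 2 * (k + 1) by ring]
        exact (hv (k + 1)).1
      · intro k
        show (a, c) ∈ lineThrough (A (2 * k + 1)) (A (2 * k + 1 + 1))
        rw [show 2 * k + 1 + 1 = 2 * k + 2 by ring]
        exact (hs k).2
      · intro k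
        show IsPar (A (2 * k + 2 + 1) - A (2 * k + 1 + 1)) d
        rw [show 2 * k + 2 + 1 = 2 * (k + 1) + 1 by ring,
          show 2 * k + 1 + 1 = 2 * (k + 1) by ring]
        exact (hs (k + 1)).1
      · obtain ⟨k, hk⟩ := hoff
        exact ⟨k - 1, by show A (k - 1 + 1) ∉ _; rw [sub_add_cancel]; exact hk⟩
end
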